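/- arXiv:1703.04065 — 7 statements merged into one kernel-verified Lean document; each statement's English description precedes it below -/
import Mathlib

section
/- If $G$ is a connected graph and the total number of cut vertices and cut edges of $G$ is $t$, then $trc(G) \geq t$. -/
open SimpleGraph

/-- A total coloring (edge colors `cE`, vertex colors `cV`) makes `G`
total-rainbow connected if any two distinct vertices are joined by a path
whose edges and internal vertices receive pairwise distinct colors. -/
def IsTRCColoring {V : Type*} (G : SimpleGraph V) {k : ℕ}
    (cE : Sym2 V → Fin k) (cV : V → Fin k) : Prop :=
  ∀ u v : V, u ≠ v → ∃ p : G.Walk u v, p.IsPath ∧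
    (p.edges.map cE ++ p.support.tail.dropLast.map cV).Nodup

/-- The total-rainbow connection number of `G`. -/
noncomputable def trc {V : Type*} (G : SimpleGraph V) : ℕ :=
  sInf {k | ∃ (cE : Sym2 V → Fin k) (cV : V → Fin k), IsTRCColoring G cE cV}

/-- `v` is a cut vertex of `G`: removing it disconnects the graph. -/
def IsCutVertex {V : Type*} (G : SimpleGraph V) (v : V) : Prop :=
  G.Connected ∧ ¬ (G.induce ({v}ᶜ : Set V)).Connected

/-!
Vertices and edges are handled uniformly as elements of `V ⊕ Sym2 V`, coloured by
`Sum.elim cV cE`; a cut element is a cut vertex or a bridge.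

Two distinct cut elements `x`, `y` receive different colours. Pick a vertex `a` of `x` and a
vertex `b` of `y` with `a ≠ b`, a vertex `s` separated from `b` by `x`, and a vertex `t`
separated from `a` by `y`. An `s`–`b` path meets `x`, so it passes through `a`, and cutting it
there gives an `s`–`a` walk that misses `b`, hence misses `y`; symmetrically `t` reaches `b`
without meeting `x`. So every `s`–`t` walk meets both `x` and `y`, which are then distinct
inner elements of the rainbow `s`–`t` path.
-/

namespace SimpleGraph

variable {V : Type*} {G : SimpleGraph V}

def Walk.Meets {a b : V} (p : G.Walk a b) : V ⊕ Sym2 V → Prop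
  | .inl v => v ∈ p.support
  | .inr e => e ∈ p.edges

def Walk.innerElems {a b : V} (p : G.Walk a b) : List (V ⊕ Sym2 V) :=
  p.edges.map .inr ++ p.support.tail.dropLast.map .inl

def Touches : V ⊕ Sym2 V → V → Prop
  | .inl v, r => v = r
  | .inr e, r => r ∈ e

def ReachableAvoiding (G : SimpleGraph V) (x : V ⊕ Sym2 V) (a b : V) : Prop :=
  ∃ p : G.Walk a b, ¬ p.Meets x

def Separates (G : SimpleGraph V) (x : V ⊕ Sym2 V) (a b : V) : Prop :=
  x ≠ .inl a ∧ x ≠ .inl b ∧ ¬ G.ReachableAvoiding x a b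

def IsCutElem (G : SimpleGraph V) : V ⊕ Sym2 V → Prop :=
  Sum.elim (IsCutVertex G) G.IsBridge

variable {x y : V ⊕ Sym2 V} {a b c r : V}

lemma Touches.ne_inl (h : Touches x a) (hab : a ≠ b) : x ≠ .inl b := by
  rintro rfl
  exact hab h.symm

lemma Walk.Meets.mem_support {p : G.Walk a b} (h : p.Meets x) (hr : Touches x r) :
    r ∈ p.support := by
  cases x with
  | inl v => exact hr ▸ h
  | inr e => exact p.mem_support_of_mem_edges h hr

lemma Walk.mem_support_tail_dropLast {p : G.Walk a b} (hc : c ∈ p.support) (hca : c ≠ a)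
    (hcb : c ≠ b) : c ∈ p.support.tail.dropLast := by
  have htail : c ∈ p.support.tail := by
    rw [← p.cons_tail_support, List.mem_cons] at hc
    exact hc.resolve_left hca
  have hlast : p.support.tail.getLast (List.ne_nil_of_mem htail) = b := by
    rw [List.getLast_tail]
    exact p.getLast_support
  rw [← List.dropLast_append_getLast (List.ne_nil_of_mem htail), hlast] at htail
  simpa [hcb] using htail

lemma Walk.Meets.mem_innerElems {p : G.Walk a b} (h : p.Meets x) (ha : x ≠ .inl a)
    (hb : x ≠ .inl b) : x ∈ p.innerElems := by
  cases x with
  | inl v =>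
    refine List.mem_append_right _ (List.mem_map_of_mem ?_)
    exact Walk.mem_support_tail_dropLast h (by grind) (by grind)
  | inr e => exact List.mem_append_left _ (List.mem_map_of_mem h)

lemma Walk.IsPath.nodup_innerElems {p : G.Walk a b} (hp : p.IsPath) : p.innerElems.Nodup := by
  refine List.Nodup.append (hp.isTrail.edges_nodup.map Sum.inr_injective)
    ((hp.support_nodup.sublist ((List.dropLast_sublist _).trans (List.tail_sublist _))).map
      Sum.inl_injective) ?_
  intro _ he hv
  obtain ⟨e, -, rfl⟩ := List.mem_map.1 he
  obtain ⟨v, -, hv⟩ := List.mem_map.1 hv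
  cases hv

lemma Walk.map_innerElems {k : ℕ} (cE : Sym2 V → Fin k) (cV : V → Fin k) (p : G.Walk a b) :
    p.innerElems.map (Sum.elim cV cE) = p.edges.map cE ++ p.support.tail.dropLast.map cV := by
  simp [Walk.innerElems, Function.comp_def]

lemma ReachableAvoiding.refl (h : x ≠ .inl a) : G.ReachableAvoiding x a a :=
  ⟨.nil, by cases x <;> simp_all [Walk.Meets]⟩

lemma ReachableAvoiding.symm (h : G.ReachableAvoiding x a b) : G.ReachableAvoiding x b a := by
  obtain ⟨p, hp⟩ := h
  exact ⟨p.reverse, by cases x <;> simp_all [Walk.Meets]⟩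

lemma ReachableAvoiding.trans (hab : G.ReachableAvoiding x a b) (hbc : G.ReachableAvoiding x b c) :
    G.ReachableAvoiding x a c := by
  obtain ⟨p, hp⟩ := hab
  obtain ⟨q, hq⟩ := hbc
  exact ⟨p.append q, by cases x <;> simp_all [Walk.Meets]⟩

lemma ReachableAvoiding.ne_inl_left (h : G.ReachableAvoiding x a b) : x ≠ .inl a := by
  rintro rfl
  obtain ⟨p, hp⟩ := h
  exact hp p.start_mem_support

lemma Separates.meets (h : G.Separates x a b) (p : G.Walk a b) : p.Meets x :=
  by_contra fun hp => h.2.2 ⟨p, hp⟩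

lemma Separates.ne (h : G.Separates x a b) : a ≠ b := by
  rintro rfl
  exact h.2.2 (.refl h.1)

lemma Separates.exists_separates_right (h : G.Separates x a b) (hr : x ≠ .inl r) :
    ∃ s, G.Separates x s r := by
  by_cases har : G.ReachableAvoiding x a r
  · exact ⟨b, h.2.1, hr, fun hbr => h.2.2 (har.trans hbr.symm)⟩
  · exact ⟨a, h.1, hr, har⟩

lemma Separates.reachableAvoiding (hcb : G.Reachable c b) (h : G.Separates x c b)
    (hx : Touches x a) (hy : Touches y b) (hab : a ≠ b) : G.ReachableAvoiding y c a := by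
  classical
  obtain ⟨q, hq⟩ := hcb.some.toPath
  have ha : a ∈ q.support := (h.meets q).mem_support hx
  exact ⟨q.takeUntil a ha, fun hy' =>
    Walk.endpoint_notMem_support_takeUntil hq ha hab.symm (hy'.mem_support hy)⟩

lemma IsBridge.separates (h : G.IsBridge s(a, b)) : G.Separates (.inr s(a, b)) a b :=
  ⟨nofun, nofun, fun ⟨p, hp⟩ => hp (isBridge_iff_forall_walk_mem_edges.1 h p)⟩

lemma IsBridge.exists_mem_ne {e : Sym2 V} (h : G.IsBridge e) (b : V) : ∃ a ∈ e, a ≠ b := by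
  induction e using Sym2.ind with | _ c d => ?_
  have hcd : c ≠ d := by rintro rfl; simp [IsBridge] at h
  by_cases hcb : c = b
  · exact ⟨d, by simp, hcb ▸ hcd.symm⟩
  · exact ⟨c, by simp, hcb⟩


lemma _root_.IsCutVertex.exists_separates {u : V} (h : IsCutVertex G u) (hr : r ≠ u) :
    ∃ a b, G.Separates (.inl u) a b := by
  by_contra! hsep
  refine h.2 ((connected_iff_exists_forall_reachable _).2 ⟨⟨r, hr⟩, fun ⟨b, hb⟩ => ?_⟩)
  obtain ⟨p, hp⟩ : G.ReachableAvoiding (.inl u) r b := by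
    by_contra hrb
    exact hsep r b ⟨fun h => hr (Sum.inl_injective h).symm, fun h => hb (Sum.inl_injective h).symm,
      hrb⟩
  exact (p.induce _ fun v hv => by rintro rfl; exact hp hv).reachable

lemma IsCutElem.exists_separates (h : G.IsCutElem x) (hr : x ≠ .inl r) :
    ∃ s, G.Separates x s r := by
  cases x with
  | inl u =>
    obtain ⟨a, b, hab⟩ := IsCutVertex.exists_separates h fun hru => hr (hru ▸ rfl)
    exact hab.exists_separates_right hr
  | inr e =>
    induction e using Sym2.ind with | _ a b => ?_
    exact (IsBridge.separates h).exists_separates_right hr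

lemma exists_touches (x : V ⊕ Sym2 V) : ∃ a, Touches x a := by
  cases x with
  | inl v => exact ⟨v, rfl⟩
  | inr e => exact ⟨e.out.1, Sym2.out_fst_mem e⟩

lemma IsCutElem.exists_touches_ne (hx : G.IsCutElem x) (hy : G.IsCutElem y) (hxy : x ≠ y) :
    ∃ a b, Touches x a ∧ Touches y b ∧ a ≠ b := by
  cases x with
  | inl u =>
    cases y with
    | inl v => exact ⟨u, v, rfl, rfl, fun huv => hxy (huv ▸ rfl)⟩
    | inr f =>
      obtain ⟨b, hbf, hbu⟩ := IsBridge.exists_mem_ne hy u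
      exact ⟨u, b, rfl, hbf, hbu.symm⟩
  | inr e =>
    obtain ⟨b, hb⟩ := exists_touches y
    obtain ⟨a, hae, hab⟩ := IsBridge.exists_mem_ne hx b
    exact ⟨a, b, hae, hb, hab⟩

lemma exists_separates_of_isCutElem (hG : G.Connected) (hx : G.IsCutElem x) (hy : G.IsCutElem y)
    (hxy : x ≠ y) : ∃ s t, G.Separates x s t ∧ G.Separates y s t := by
  obtain ⟨a, b, hxa, hyb, hab⟩ := hx.exists_touches_ne hy hxy
  obtain ⟨s, hs⟩ := hx.exists_separates (hxa.ne_inl hab)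
  obtain ⟨t, ht⟩ := hy.exists_separates (hyb.ne_inl hab.symm)
  have hsa : G.ReachableAvoiding y s a := hs.reachableAvoiding (hG s b) hxa hyb hab
  have htb : G.ReachableAvoiding x t b := ht.reachableAvoiding (hG t a) hyb hxa hab.symm
  exact ⟨s, t, ⟨hs.1, htb.ne_inl_left, fun hst => hs.2.2 (hst.trans htb)⟩,
    ⟨hsa.ne_inl_left, ht.1, fun hst => ht.2.2 (hst.symm.trans hsa)⟩⟩

lemma _root_.IsTRCColoring.injOn_isCutElem {k : ℕ} {cE : Sym2 V → Fin k} {cV : V → Fin k}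
    (hc : IsTRCColoring G cE cV) (hG : G.Connected) :
    Set.InjOn (Sum.elim cV cE) {x | G.IsCutElem x} := by
  intro x hx y hy hxy
  by_contra hne
  obtain ⟨s, t, hxs, hys⟩ := exists_separates_of_isCutElem hG hx hy hne
  obtain ⟨p, -, hnd⟩ := hc s t hxs.ne
  rw [← p.map_innerElems] at hnd
  exact hne (List.inj_on_of_nodup_map hnd ((hxs.meets p).mem_innerElems hxs.1 hxs.2.1)
    ((hys.meets p).mem_innerElems hys.1 hys.2.1) hxy)

lemma exists_isTRCColoring [Finite V] (hG : G.Connected) :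
    ∃ (k : ℕ) (cE : Sym2 V → Fin k) (cV : V → Fin k), IsTRCColoring G cE cV := by
  classical
  obtain ⟨k, ⟨f⟩⟩ := Finite.exists_equiv_fin (V ⊕ Sym2 V)
  refine ⟨k, f ∘ .inr, f ∘ .inl, fun s t _ => ?_⟩
  obtain ⟨p, hp⟩ := (hG s t).some.toPath
  refine ⟨p, hp, ?_⟩
  rw [← p.map_innerElems, Sum.elim_comp_inl_inr]
  exact hp.nodup_innerElems.map f.injective

lemma ncard_setOf_isCutElem [Finite V] :
    {x | G.IsCutElem x}.ncard = {v | IsCutVertex G v}.ncard + {e | G.IsBridge e}.ncard := by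
  simp only [← Nat.card_coe_set_eq]
  exact (Nat.card_congr Equiv.subtypeSum).trans Nat.card_sum

end SimpleGraph

open SimpleGraph

theorem stmt_6 {V : Type*} [Fintype V] (G : SimpleGraph V)
    (hconn : G.Connected) :
    ({v : V | IsCutVertex G v}.ncard + {e : Sym2 V | G.IsBridge e}.ncard) ≤
      trc G := by
  obtain ⟨k₀, cE₀, cV₀, hc₀⟩ := exists_isTRCColoring hconn
  refine le_csInf ⟨k₀, cE₀, cV₀, hc₀⟩ fun k ⟨cE, cV, hc⟩ => ?_
  calc _ = {x | G.IsCutElem x}.ncard := ncard_setOf_isCutElem.symm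
    _ ≤ (Set.univ : Set (Fin k)).ncard :=
      Set.ncard_le_ncard_of_injOn _ (fun _ _ => trivial) (hc.injOn_isCutElem hconn)
    _ = k := by simp
end

section
/- For the cycle $C_n$ on $n \geq 13$ vertices, $trc(C_n) = n$. -/
/-! Colour the edge `{a, a + 1}` of `C_n` by `a` and the vertex `v` by `v + ⌊n/2⌋`: along any arc of
length `d ≤ n/2` the colours are `u, …, u + d - 1` and `u + ⌊n/2⌋ + 1, …, u + ⌊n/2⌋ + d - 1`, all
distinct, so `n` colours suffice. Conversely, with fewer than `n` colours the vertices `u` and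
`u + t`, `t = ⌊(n-1)/2⌋`, must be joined by the short arc, since the long one carries at least `n`
colours. Reading edge and vertex colours alternately around the cycle gives a `2n`-periodic sequence
in which any two positions at distance at most `2t - 3` differ; for `n ≥ 13` some gap between three
equal entries in a period would be that small, so each colour occurs at most twice among `2n`
positions, forcing at least `n` colours. -/

open SimpleGraph

open Finset in
theorem le_two_mul_card_of_periodic {α : Type*} [Fintype α] {g : ℕ → α} {m d : ℕ}
    (hper : ∀ j, g (j + m) = g j) (hsep : ∀ i j, i < j → j ≤ i + d → g i ≠ g j)
    (hmd : m < 3 * (d + 1)) : m ≤ 2 * Fintype.card α := by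
  classical
  have hfiber (c : α) : #{j ∈ range m | g j = c} ≤ 2 := by
    -- three members would cut the period into three gaps, one of them at most `d`
    by_contra! h
    set F := {j ∈ range m | g j = c}
    have hgap : ∀ x ∈ F, ∀ y ∈ F, x < y → x + d < y ∧ y + d < x + m := by
      intro x hx y hy hxy
      simp only [F, mem_filter, mem_range] at hx hy
      refine ⟨not_le.mp fun h ↦ hsep x y hxy h (hx.2.trans hy.2.symm), not_le.mp fun h ↦ ?_⟩
      exact hsep y (x + m) (by omega) h (by rw [hper, hy.2, hx.2])
    have hlt : ∀ x ∈ F, x < m := fun x hx ↦ mem_range.mp (mem_filter.mp hx).1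
    obtain ⟨a, ha, b, hb, c, hc, hab, hac, hbc⟩ := two_lt_card.mp h
    have := hgap a ha b hb; have := hgap b hb a ha; have := hgap a ha c hc
    have := hgap c hc a ha; have := hgap b hb c hc; have := hgap c hc b hb
    have := hlt a ha; have := hlt b hb; have := hlt c hc
    omega
  simpa using card_le_mul_card_image_of_maps_to (s := range m) (t := univ) (f := g)
    (fun _ _ ↦ mem_univ _) 2 fun c _ ↦ hfiber c

open List

open Fin.CommRing Fin.NatCast

namespace Fin

variable {n : ℕ} [NeZero n]

lemma natCast_inj_of_lt {a b : ℕ} (ha : a < n) (hb : b < n) (h : (a : Fin n) = b) : a = b :=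
  CharP.natCast_injOn_Iio (Fin n) n ha hb h

lemma add_one_add_one_ne_self (hn : 3 ≤ n) (a : Fin n) : a + 1 + 1 ≠ a := fun h ↦ by
  have h2 : ((2 : ℕ) : Fin n) = (0 : ℕ) := by push_cast; linear_combination h
  exact absurd (natCast_inj_of_lt (by omega) (by omega) h2) (by norm_num)

lemma val_sub_le_half_or_val_sub_le_half (u v : Fin n) :
    (v - u).val ≤ n / 2 ∨ (u - v).val ≤ n / 2 := by
  rw [← neg_sub, Fin.val_neg]
  split_ifs <;> omega

end Fin

namespace SimpleGraph.Walk

variable {V α : Type*} {G : SimpleGraph V} {u v : V}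

def totalColors (cE : Sym2 V → α) (cV : V → α) (p : G.Walk u v) : List α :=
  p.edges.map cE ++ p.support.tail.dropLast.map cV

variable (cE : Sym2 V → α) (cV : V → α) (p : G.Walk u v)

lemma edges_eq_map_range_getVert :
    p.edges = (range p.length).map fun i ↦ s(p.getVert i, p.getVert (i + 1)) := by
  refine ext_getElem (by simp) fun i h _ ↦ ?_
  simp [getElem_edges]

lemma support_tail_dropLast_eq_map_range_getVert :
    p.support.tail.dropLast = (range (p.length - 1)).map fun i ↦ p.getVert (i + 1) := by
  refine ext_getElem (by simp) fun i h _ ↦ ?_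
  simp [support_getElem_eq_getVert]

lemma totalColors_eq_of_getVert {f : ℕ → V} (hf : ∀ i ≤ p.length, p.getVert i = f i) :
    p.totalColors cE cV = (range p.length).map (fun i ↦ cE s(f i, f (i + 1))) ++
      (range (p.length - 1)).map fun i ↦ cV (f (i + 1)) := by
  rw [totalColors, edges_eq_map_range_getVert, support_tail_dropLast_eq_map_range_getVert,
    List.map_map, List.map_map]
  congr 1 <;> refine map_congr_left fun i hi ↦ ?_ <;> rw [mem_range] at hi
  · simp [hf i (by omega), hf (i + 1) (by omega)]
  · simp [hf (i + 1) (by omega)]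

lemma length_totalColors : (p.totalColors cE cV).length = 2 * p.length - 1 := by
  simp only [totalColors, List.length_append, List.length_map, length_edges, List.length_dropLast,
    List.length_tail, length_support, add_tsub_cancel_right]
  omega

lemma totalColors_reverse_perm : (p.reverse.totalColors cE cV).Perm (p.totalColors cE cV) := by
  have hcomm : p.support.dropLast.tail = p.support.tail.dropLast := by
    rcases p.support with _ | ⟨a, _ | ⟨b, l⟩⟩ <;> simp
  rw [totalColors, totalColors, edges_reverse, support_reverse, tail_reverse, dropLast_reverse,
    hcomm, map_reverse, map_reverse]
  exact (reverse_perm _).append (reverse_perm _)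

end SimpleGraph.Walk

namespace SimpleGraph

section ArithmeticWalks

variable {A : Type*} {G : SimpleGraph A} {σ : A}

def arcWalk [AddMonoid A] (hσ : ∀ a, G.Adj a (a + σ)) (u : A) : (ℓ : ℕ) → G.Walk u (u + ℓ • σ)
  | 0 => Walk.nil.copy rfl (by simp)
  | ℓ + 1 => (Walk.cons (hσ u) (arcWalk hσ (u + σ) ℓ)).copy rfl (by rw [succ_nsmul', add_assoc])

lemma length_arcWalk [AddMonoid A] (hσ : ∀ a, G.Adj a (a + σ)) (u : A) (ℓ : ℕ) :
    (arcWalk hσ u ℓ).length = ℓ := by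
  induction ℓ generalizing u with
  | zero => simp [arcWalk]
  | succ ℓ ih => simp [arcWalk, ih]

lemma getVert_arcWalk [AddMonoid A] (hσ : ∀ a, G.Adj a (a + σ)) (u : A) {ℓ i : ℕ}
    (hi : i ≤ ℓ) :
    (arcWalk hσ u ℓ).getVert i = u + i • σ := by
  induction ℓ generalizing u i with
  | zero => simp_all [arcWalk]
  | succ ℓ ih =>
    cases i with
    | zero => simp
    | succ i => simp [arcWalk, ih (u + σ) (by omega : i ≤ ℓ), succ_nsmul', add_assoc]

lemma Walk.IsPath.getVert_eq_add_nsmul [AddGroup A]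
    (hG : ∀ x y, G.Adj x y → y = x + σ ∨ y = x - σ)
    {u v : A} {p : G.Walk u v} (hp : p.IsPath) (h₁ : p.getVert 1 = u + σ) :
    ∀ i ≤ p.length, p.getVert i = u + i • σ := by
  intro i hi
  induction i using Nat.strong_induction_on with
  | _ i ih =>
  match i, ih with
  | 0, _ => simp
  | 1, _ => simpa using h₁
  | i + 2, ih =>
    have hprev := ih (i + 1) (by omega) (by omega)
    rcases hG _ _ (p.adj_getVert_succ (i := i + 1) (by omega)) with h | h
    · rw [h, hprev, succ_nsmul _ (i + 1), add_assoc]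
    · have hback : p.getVert (i + 2) = p.getVert i := by
        rw [h, hprev, ih i (by omega) (by omega), succ_nsmul, ← add_assoc, add_sub_cancel_right]
      have := hp.getVert_injOn (by simp only [Set.mem_ofPred_eq]; omega)
        (by simp only [Set.mem_ofPred_eq]; omega) hback
      omega

end ArithmeticWalks

section Cycle

variable {n : ℕ} [NeZero n] {α : Type*}

lemma cycleGraph_adj_add_one (hn : 2 ≤ n) (a : Fin n) : (cycleGraph n).Adj a (a + 1) := by
  obtain ⟨m, rfl⟩ : ∃ m, n = m + 2 := ⟨n - 2, by omega⟩
  rw [cycleGraph_adj]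
  right
  ring

lemma eq_add_one_or_eq_sub_one_of_cycleGraph_adj {x y : Fin n} (h : (cycleGraph n).Adj x y) :
    y = x + 1 ∨ y = x - 1 := by
  have hn : 2 ≤ n := by
    rcases cycleGraph_adj'.mp h with h' | h' <;> omega
  obtain ⟨m, rfl⟩ : ∃ m, n = m + 2 := ⟨n - 2, by omega⟩
  rcases cycleGraph_adj.mp h with h | h
  · right; rw [← h]; ring
  · left; rw [← h]; ring

lemma cycleGraph_getVert_eq_add_or_eq_sub {u v : Fin n} {p : (cycleGraph n).Walk u v}
    (hp : p.IsPath) :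
    (∀ i ≤ p.length, p.getVert i = u + i) ∨ ∀ i ≤ p.length, p.getVert i = u - i := by
  rcases Nat.eq_zero_or_pos p.length with h0 | hpos
  · left
    intro i hi
    obtain rfl : i = 0 := by omega
    simp
  rcases eq_add_one_or_eq_sub_one_of_cycleGraph_adj (p.adj_getVert_succ (i := 0) hpos) with h | h
  · left
    intro i hi
    rw [hp.getVert_eq_add_nsmul (fun _ _ ↦ eq_add_one_or_eq_sub_one_of_cycleGraph_adj)
      (by simpa using h) i hi, nsmul_one]
  · right
    intro i hi
    have hG (x y : Fin n) (hxy : (cycleGraph n).Adj x y) : y = x + -1 ∨ y = x - -1 := by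
      rw [← sub_eq_add_neg, sub_neg_eq_add]
      exact (eq_add_one_or_eq_sub_one_of_cycleGraph_adj hxy).symm
    rw [hp.getVert_eq_add_nsmul hG (by simpa [← sub_eq_add_neg] using h) i hi, smul_neg, nsmul_one,
      ← sub_eq_add_neg]

lemma isPath_arcWalk (hn : 2 ≤ n) (u : Fin n) {ℓ : ℕ} (hℓ : ℓ < n) :
    (arcWalk (cycleGraph_adj_add_one hn) u ℓ).IsPath := by
  rw [← Walk.IsPath.getVert_injOn_iff]
  intro i hi j hj hij
  simp only [Set.mem_ofPred_eq, length_arcWalk] at hi hj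
  rw [getVert_arcWalk _ _ hi, getVert_arcWalk _ _ hj, nsmul_one, nsmul_one, add_right_inj] at hij
  exact Fin.natCast_inj_of_lt (by omega) (by omega) hij

def arcColors (cE : Sym2 (Fin n) → α) (cV : Fin n → α) (u : Fin n) (L : ℕ) : List α :=
  (range L).map (fun i : ℕ ↦ cE s(u + i, u + ((i + 1 : ℕ) : Fin n))) ++
    (range (L - 1)).map fun i : ℕ ↦ cV (u + ((i + 1 : ℕ) : Fin n))

lemma totalColors_eq_arcColors (cE : Sym2 (Fin n) → α) (cV : Fin n → α) {u v : Fin n}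
    {p : (cycleGraph n).Walk u v} (hp : ∀ i ≤ p.length, p.getVert i = u + i) :
    p.totalColors cE cV = arcColors cE cV u p.length :=
  p.totalColors_eq_of_getVert cE cV hp

/-- The value `0` on non-edges is never used. -/
def cycleEdgeColor (hn : 3 ≤ n) : Sym2 (Fin n) → Fin n :=
  Sym2.lift ⟨fun a b ↦ if b = a + 1 then a else if a = b + 1 then b else 0, fun a b ↦ by
    by_cases hab : b = a + 1
    · subst hab
      simp [(Fin.add_one_add_one_ne_self hn a).symm]
    · by_cases hba : a = b + 1
      · subst hba
        simp [(Fin.add_one_add_one_ne_self hn b).symm]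
      · simp [hab, hba]⟩

lemma cycleEdgeColor_mk_add_one (hn : 3 ≤ n) (a : Fin n) : cycleEdgeColor hn s(a, a + 1) = a := by
  simp [cycleEdgeColor]

def cycleVertexColor (v : Fin n) : Fin n := v + (n / 2 : ℕ)

lemma nodup_totalColors_arcWalk (hn : 3 ≤ n) (u : Fin n) {d : ℕ} (hd : d ≤ n / 2) :
    ((arcWalk (cycleGraph_adj_add_one (by omega)) u d).totalColors (cycleEdgeColor hn)
      cycleVertexColor).Nodup := by
  rw [totalColors_eq_arcColors _ _ fun i hi ↦ by
    rw [getVert_arcWalk _ _ (by simpa [length_arcWalk] using hi), nsmul_one], length_arcWalk]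
  have hcolors : arcColors (cycleEdgeColor hn) cycleVertexColor u d =
      (range d ++ (range (d - 1)).map (· + 1 + n / 2)).map fun x : ℕ ↦ u + (x : Fin n) := by
    rw [arcColors, map_append, List.map_map]
    congr 1 <;> refine map_congr_left fun i _ ↦ ?_
    · rw [Nat.cast_succ, ← add_assoc, cycleEdgeColor_mk_add_one]
    · simp only [cycleVertexColor, Function.comp_apply]
      push_cast
      ring
  have hlt : ∀ x ∈ range d ++ (range (d - 1)).map (· + 1 + n / 2), x < n := by
    simp only [mem_append, mem_range, mem_map]
    omega
  rw [hcolors]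
  refine Nodup.map_on (fun x hx y hy h ↦ Fin.natCast_inj_of_lt (hlt x hx) (hlt y hy)
    (add_left_cancel h)) ?_
  refine nodup_append.mpr ⟨nodup_range, nodup_range.map fun i j h ↦ by omega, ?_⟩
  simp only [mem_range, mem_map]
  omega

lemma isTRCColoring_cycleEdgeColor (hn : 3 ≤ n) :
    IsTRCColoring (cycleGraph n) (cycleEdgeColor hn) cycleVertexColor := by
  have hshort (u v : Fin n) (h : (v - u).val ≤ n / 2) : ∃ p : (cycleGraph n).Walk u v, p.IsPath ∧
      (p.totalColors (cycleEdgeColor hn) cycleVertexColor).Nodup := by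
    have hend : u + (v - u).val • (1 : Fin n) = v := by
      rw [nsmul_one, Fin.cast_val_eq_self, add_sub_cancel]
    have hlt := (v - u).isLt
    generalize (v - u).val = d at h hend hlt
    subst hend
    exact ⟨_, isPath_arcWalk (by omega) u hlt, nodup_totalColors_arcWalk hn u h⟩
  intro u v _
  rcases Fin.val_sub_le_half_or_val_sub_le_half u v with h | h
  · exact hshort u v h
  · obtain ⟨p, hp, hcolors⟩ := hshort v u h
    exact ⟨p.reverse, hp.reverse, (p.totalColors_reverse_perm _ _).nodup_iff.mpr hcolors⟩

/-- The long arc from `u` to `u + t` has `2 (n - t) - 1 ≥ n` edges and inner vertices, too many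
to be rainbow with fewer than `n` colours, so the short arc is rainbow. -/
lemma nodup_arcColors {k : ℕ} (hk : k < n) {cE : Sym2 (Fin n) → Fin k}
    {cV : Fin n → Fin k} (H : IsTRCColoring (cycleGraph n) cE cV) (u : Fin n) {t : ℕ}
    (ht₀ : 0 < t) (ht : 2 * t < n) : (arcColors cE cV u t).Nodup := by
  have hne : u ≠ u + t := fun h ↦ by
    have h0 : ((t : ℕ) : Fin n) = ((0 : ℕ) : Fin n) := by push_cast; linear_combination -h
    exact absurd (Fin.natCast_inj_of_lt (by omega) (by omega) h0) (by omega)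
  obtain ⟨p, hp, hcolors⟩ := H u (u + t) hne
  replace hcolors : (p.totalColors cE cV).Nodup := hcolors
  have hlen : p.length < n := by simpa using hp.length_lt
  have hend := p.getVert_length
  rcases cycleGraph_getVert_eq_add_or_eq_sub hp with hcw | hccw
  · have hL : p.length = t := by
      refine Fin.natCast_inj_of_lt hlen (by omega) ?_
      linear_combination (hcw _ le_rfl).symm.trans hend
    rwa [totalColors_eq_arcColors cE cV hcw, hL] at hcolors
  · have hL : p.length = n - t := by
      refine Fin.natCast_inj_of_lt hlen (by omega) ?_
      rw [Nat.cast_sub (by omega : t ≤ n), Fin.natCast_self]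
      linear_combination -(hccw _ le_rfl).symm.trans hend
    have := hcolors.length_le_card
    rw [Walk.length_totalColors, Fintype.card_fin] at this
    omega

section Interleaving

variable (cE : Sym2 (Fin n) → α) (cV : Fin n → α)

/-- Position `2 j` carries the colour of the edge `s(j, j + 1)` and position `2 j + 1` that of the
vertex `j + 1`, so that the colours along a clockwise arc fill a window of consecutive positions. -/
def interleavedColors (j : ℕ) : α :=
  if j % 2 = 0 then cE s(((j / 2 : ℕ) : Fin n), ((j / 2 + 1 : ℕ) : Fin n))
  else cV ((j / 2 + 1 : ℕ) : Fin n)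

lemma interleavedColors_add_two_mul (j : ℕ) :
    interleavedColors cE cV (j + 2 * n) = interleavedColors cE cV j := by
  have hhalf : (j + 2 * n) / 2 = j / 2 + n := by omega
  simp only [interleavedColors, Nat.add_mul_mod_self_left, hhalf, Nat.cast_add, Fin.natCast_self,
    add_zero, add_right_comm _ n 1]

def windowPositions (a L : ℕ) : List ℕ :=
  (range L).map (fun i ↦ 2 * a + 2 * i) ++ (range (L - 1)).map fun i ↦ 2 * a + 2 * i + 1

lemma mem_windowPositions {a L j : ℕ} (h₁ : 2 * a ≤ j) (h₂ : j + 2 ≤ 2 * a + 2 * L) :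
    j ∈ windowPositions a L := by
  simp only [windowPositions, mem_append, mem_map, mem_range]
  rcases Nat.even_or_odd' (j - 2 * a) with ⟨i, hi | hi⟩
  · exact Or.inl ⟨i, by omega, by omega⟩
  · exact Or.inr ⟨i, by omega, by omega⟩

lemma map_interleavedColors_windowPositions (a L : ℕ) :
    (windowPositions a L).map (interleavedColors cE cV) = arcColors cE cV a L := by
  rw [windowPositions, arcColors, map_append, List.map_map, List.map_map]
  congr 1 <;> refine map_congr_left fun i _ ↦ ?_
  · have hhalf : (2 * a + 2 * i) / 2 = a + i := by omega
    simp only [Function.comp_apply, interleavedColors, Nat.mul_add_mod_self_left, Nat.mul_mod_right,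
      if_true, hhalf]
    push_cast
    ring_nf
  · have hhalf : (2 * a + 2 * i + 1) / 2 = a + i := by omega
    have hodd : (2 * a + 2 * i + 1) % 2 = 1 := by omega
    simp only [Function.comp_apply, interleavedColors, hodd, hhalf]
    push_cast
    ring_nf

end Interleaving

lemma le_of_isTRCColoring_cycleGraph (hn : 13 ≤ n) {k : ℕ} {cE : Sym2 (Fin n) → Fin k}
    {cV : Fin n → Fin k} (H : IsTRCColoring (cycleGraph n) cE cV) : n ≤ k := by
  by_contra! hk
  set t := (n - 1) / 2
  have hsep (i j : ℕ) (hij : i < j) (hji : j ≤ i + (2 * t - 3)) :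
      interleavedColors cE cV i ≠ interleavedColors cE cV j := fun h ↦ by
    have hnodup := nodup_arcColors hk H ((i / 2 : ℕ) : Fin n) (t := t)
      (by omega) (by omega)
    rw [← map_interleavedColors_windowPositions] at hnodup
    exact hij.ne (inj_on_of_nodup_map hnodup (mem_windowPositions (by omega) (by omega))
      (mem_windowPositions (by omega) (by omega)) h)
  have := le_two_mul_card_of_periodic (interleavedColors_add_two_mul cE cV) hsep (by omega)
  rw [Fintype.card_fin] at this
  omega

end Cycle

end SimpleGraph

theorem stmt_7 (n : ℕ) (hn : 13 ≤ n) :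
    trc (SimpleGraph.cycleGraph n) = n := by
  have : NeZero n := ⟨by omega⟩
  have hcol := isTRCColoring_cycleEdgeColor (n := n) (by omega)
  refine le_antisymm (Nat.sInf_le ⟨_, _, hcol⟩) (le_csInf ⟨n, _, _, hcol⟩ ?_)
  rintro k ⟨cE, cV, H⟩
  exact le_of_isTRCColoring_cycleGraph hn H
end

section
/- If $G$ is a connected graph with connected complement $\overline{G}$ and $diam(G) = 3$, then $\overline{G}$ has a spanning subgraph which is a double star (a tree obtained from an edge by attaching leaves to its two endpoints). -/
/-!
Pick `u`, `v` with `dist u v = 3`. They are non-adjacent in `G` and have no common neighbour,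
so in `Gᶜ` the edge `uv` is present and every other vertex `w` is adjacent to `v` (if `w` is a
`G`-neighbour of `u`) or else to `u`. Joining each `w` to that centre `c w` gives a spanning
double star of `Gᶜ`: the edges `w – c w` form two stars, since `c` is a retraction onto `{u, v}`
and hence constant on their components, and `uv` joins these two components.
-/

open SimpleGraph

/-- A double star: a tree obtained from an edge by attaching leaves to its
two endpoints (its only internal vertices are two adjacent vertices). -/
def IsDoubleStar {V : Type*} [Fintype V] [DecidableEq V]
    (H : SimpleGraph V) [DecidableRel H.Adj] : Prop :=
  H.IsTree ∧ ∃ u v : V, H.Adj u v ∧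
    ∀ w : V, w ≠ u → w ≠ v → H.degree w = 1

namespace SimpleGraph

variable {V : Type*}

/-- For idempotent `c`, a disjoint union of stars centred at the fixed points of `c`. -/
def starForest (c : V → V) : SimpleGraph V := fromRel fun a b ↦ b = c a

section StarForest

variable {c : V → V} {a b : V}

lemma starForest_adj : (starForest c).Adj a b ↔ a ≠ b ∧ (b = c a ∨ a = c b) := fromRel_adj ..

lemma starForest_adj_apply (ha : c a ≠ a) : (starForest c).Adj a (c a) :=
  starForest_adj.mpr ⟨ha.symm, .inl rfl⟩

lemma starForest_adj_iff_of_apply_ne (hc : ∀ x, c (c x) = c x) (ha : c a ≠ a) :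
    (starForest c).Adj a b ↔ b = c a := by
  refine ⟨fun h ↦ ?_, fun h ↦ h ▸ starForest_adj_apply ha⟩
  obtain ⟨-, hb | rfl⟩ := starForest_adj.mp h
  · exact hb
  · exact absurd (hc b) ha

lemma starForest_le {G : SimpleGraph V} (h : ∀ x, c x ≠ x → G.Adj x (c x)) :
    starForest c ≤ G := by
  intro a b hab
  obtain ⟨hne, rfl | rfl⟩ := starForest_adj.mp hab
  · exact h a hne.symm
  · exact (h b hne).symm

lemma Reachable.apply_eq_of_starForest (hc : ∀ x, c (c x) = c x)
    (h : (starForest c).Reachable a b) : c a = c b := by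
  obtain ⟨p⟩ := h
  induction p with
  | nil => rfl
  | cons hadj _ ih =>
    rw [← ih]
    obtain ⟨-, rfl | rfl⟩ := starForest_adj.mp hadj
    exacts [(hc _).symm, hc _]

lemma isAcyclic_starForest (hc : ∀ x, c (c x) = c x) : (starForest c).IsAcyclic := by
  refine isAcyclic_iff_forall_adj_isBridge.mpr fun a b hab ↦ ?_
  wlog h : b = c a generalizing a b
  · rw [Sym2.eq_swap]
    exact this b a hab.symm ((starForest_adj.mp hab).2.resolve_left h)
  subst h
  refine isBridge_iff.mpr (not_reachable_of_neighborSet_left_eq_empty hab.ne ?_)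
  refine Set.eq_empty_of_forall_notMem fun x ⟨hx, hne⟩ ↦ hne ?_
  rw [(starForest_adj_iff_of_apply_ne hc hab.ne.symm).mp hx]
  exact ⟨rfl, hab.ne⟩

end StarForest

section DoubleStar

variable {u v : V} {c : V → V}

lemma starForest_sup_edge_adj_iff (hc : ∀ x, c x = u ∨ c x = v) {w b : V} (hwu : w ≠ u)
    (hwv : w ≠ v) : (starForest c ⊔ edge u v).Adj w b ↔ b = c w := by
  have hcw : c w ≠ w := by rcases hc w with h | h <;> rw [h] <;> tauto
  refine ⟨fun h ↦ ?_, fun h ↦ h ▸ .inl (starForest_adj_apply hcw)⟩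
  rcases h with h | h
  · obtain ⟨-, hb | rfl⟩ := starForest_adj.mp h
    · exact hb
    · rcases hc b with h | h <;> contradiction
  · rw [edge_adj] at h
    tauto

lemma starForest_sup_edge_adj (huv : u ≠ v) : (starForest c ⊔ edge u v).Adj u v :=
  .inr ((edge_adj ..).mpr ⟨.inl ⟨rfl, rfl⟩, huv⟩)

lemma connected_starForest_sup_edge (huv : u ≠ v) (hc : ∀ x, c x = u ∨ c x = v) :
    (starForest c ⊔ edge u v).Connected := by
  refine (connected_iff_exists_forall_reachable _).mpr ⟨u, fun a ↦ ?_⟩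
  have hac : (starForest c ⊔ edge u v).Reachable a (c a) := by
    by_cases ha : c a = a
    · rw [ha]
    · exact (Adj.reachable (.inl (starForest_adj_apply ha)))
  rcases hc a with h | h <;> rw [h] at hac
  · exact hac.symm
  · exact (starForest_sup_edge_adj huv).reachable.trans hac.symm

lemma isAcyclic_starForest_sup_edge (huv : u ≠ v) (hcu : c u = u) (hcv : c v = v)
    (hc : ∀ x, c x = u ∨ c x = v) : (starForest c ⊔ edge u v).IsAcyclic := by
  have hcc : ∀ x, c (c x) = c x := fun x ↦ by rcases hc x with h | h <;> rw [h] <;> assumption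
  refine (isAcyclic_starForest hcc).sup_edge_of_not_reachable fun h ↦ huv ?_
  rw [← hcu, ← hcv]
  exact h.apply_eq_of_starForest hcc

lemma isDoubleStar_starForest_sup_edge [Fintype V] [DecidableEq V]
    [DecidableRel (starForest c ⊔ edge u v).Adj] (huv : u ≠ v) (hcu : c u = u) (hcv : c v = v)
    (hc : ∀ x, c x = u ∨ c x = v) : IsDoubleStar (starForest c ⊔ edge u v) := by
  refine ⟨⟨connected_starForest_sup_edge huv hc, isAcyclic_starForest_sup_edge huv hcu hcv hc⟩,
    u, v, starForest_sup_edge_adj huv, fun w hwu hwv ↦ ?_⟩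
  exact degree_eq_one_iff_existsUnique_adj.mpr ⟨c w,
    (starForest_sup_edge_adj_iff hc hwu hwv).mpr rfl,
    fun b ↦ (starForest_sup_edge_adj_iff hc hwu hwv).mp⟩

lemma exists_isDoubleStar_le_compl [Fintype V] [DecidableEq V] (G : SimpleGraph V)
    (huv : u ≠ v) (hadj : ¬G.Adj u v) (hcommon : ∀ w, G.Adj u w → ¬G.Adj v w) :
    ∃ H : SimpleGraph V, ∃ _ : DecidableRel H.Adj, H ≤ Gᶜ ∧ IsDoubleStar H := by
  classical
  set c : V → V := fun w ↦ if G.Adj u w ∨ w = v then v else u with hc_def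
  refine ⟨starForest c ⊔ edge u v, inferInstance, sup_le (starForest_le fun w hw ↦ ?_) ?_,
    isDoubleStar_starForest_sup_edge huv (by simp [hc_def, huv]) (by simp [hc_def])
      (fun w ↦ by by_cases h : G.Adj u w ∨ w = v <;> simp [hc_def, h])⟩
  · refine ⟨Ne.symm hw, ?_⟩
    simp only [hc_def] at hw ⊢
    split_ifs at hw ⊢ with h
    · exact fun hwv ↦ hcommon w (h.resolve_right hw.symm) hwv.symm
    · exact fun hwu ↦ h (.inl hwu.symm)
  · rw [edge_le_iff]
    exact .inr ⟨huv, hadj⟩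

end DoubleStar

lemma not_adj_of_one_lt_dist {G : SimpleGraph V} {u v : V} (h : 1 < G.dist u v) : ¬G.Adj u v :=
  fun huv ↦ by rw [← dist_eq_one_iff_adj] at huv; omega

lemma not_adj_of_two_lt_dist {G : SimpleGraph V} {u v w : V} (h : 2 < G.dist u v)
    (huw : G.Adj u w) : ¬G.Adj v w := fun hvw ↦ by
  have : G.dist u v ≤ 2 := dist_le (Walk.cons huw hvw.symm.toWalk)
  omega

end SimpleGraph

theorem stmt_13_general {V : Type*} [Fintype V] [DecidableEq V] (G : SimpleGraph V)
    (hdiam : G.diam = 3) :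
    ∃ H : SimpleGraph V, ∃ _ : DecidableRel H.Adj,
      H ≤ Gᶜ ∧ IsDoubleStar H := by
  have : Nonempty V := (G.nontrivial_of_diam_ne_zero (by omega)).to_nonempty
  obtain ⟨u, v, huv⟩ := G.exists_dist_eq_diam
  rw [hdiam] at huv
  refine G.exists_isDoubleStar_le_compl (u := u) (v := v) ?_ (not_adj_of_one_lt_dist ?_)
    fun _ ↦ not_adj_of_two_lt_dist ?_
  · rintro rfl
    simp at huv
  all_goals omega

theorem stmt_13 {V : Type*} [Fintype V] [DecidableEq V] (G : SimpleGraph V)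
    (hconn : G.Connected) (hcconn : Gᶜ.Connected) (hdiam : G.diam = 3) :
    ∃ H : SimpleGraph V, ∃ _ : DecidableRel H.Adj,
      H ≤ Gᶜ ∧ IsDoubleStar H :=
  stmt_13_general G hdiam
end

section
/- If $\overline{G}$ is a connected graph with $diam(\overline{G}) > 3$, then $G$ is connected and $trc(G) \leq 7$. -/
/-!
Take `u`, `w` at `Gᶜ`-distance `diam Gᶜ ≥ 4`. By the triangle inequality in `Gᶜ`, every vertex
within `Gᶜ`-distance `1` of `u` is `G`-adjacent to every vertex within `Gᶜ`-distance `1` of `w`,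
and every vertex farther from both is `G`-adjacent to `u` and to `w`; so `G` is connected.
Split `V` into `u`, `w`, the other vertices near `u`, those near `w` (both nonempty, as `Gᶜ`
joins `u` to `w`) and the rest; colour each edge by the pair of parts of its ends, and `u`, `w`
and all other vertices by `0`, `1`, `6`. Then any two vertices are joined by a total-rainbow path
of length at most `4` through the edge `uw`; the longest one, `a u w b a'` with `a`, `a'` near
`w` and `b` near `u`, uses all seven colours.
-/

open SimpleGraph

namespace SimpleGraph

variable {V : Type*} {G : SimpleGraph V}

section TotalRainbow

variable {α : Type*}

def Walk.IsTotalRainbow (cE : Sym2 V → α) (cV : V → α) {x y : V} (p : G.Walk x y) : Prop :=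
  (p.edges.map cE ++ p.support.tail.dropLast.map cV).Nodup

variable (G) in
def TotalRainbowJoined (cE : Sym2 V → α) (cV : V → α) (x y : V) : Prop :=
  ∃ p : G.Walk x y, p.IsPath ∧ p.IsTotalRainbow cE cV

variable {cE : Sym2 V → α} {cV : V → α}

lemma Walk.IsTotalRainbow.reverse {x y : V} {p : G.Walk x y} (hp : p.IsTotalRainbow cE cV) :
    p.reverse.IsTotalRainbow cE cV := by
  have hint : p.reverse.support.tail.dropLast = p.support.tail.dropLast.reverse := by
    simp [List.tail_dropLast]
  unfold IsTotalRainbow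
  rw [edges_reverse, hint, List.map_reverse, List.map_reverse]
  exact ((List.reverse_perm _).append (List.reverse_perm _)).nodup_iff.mpr hp

lemma TotalRainbowJoined.symm {x y : V} (h : G.TotalRainbowJoined cE cV x y) :
    G.TotalRainbowJoined cE cV y x :=
  let ⟨p, hp, hc⟩ := h
  ⟨p.reverse, hp.reverse, hc.reverse⟩

lemma Adj.totalRainbowJoined {x y : V} (h : G.Adj x y) : G.TotalRainbowJoined cE cV x y :=
  ⟨h.toWalk, h.isPath_toWalk, by simp [Walk.IsTotalRainbow]⟩

end TotalRainbow

lemma edist_self_le_one (v : V) : G.edist v v ≤ 1 := edist_self.trans_le zero_le_one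

lemma adj_of_one_lt_edist_compl {x y : V} (h : 1 < Gᶜ.edist x y) : G.Adj x y := by
  have hnear : ¬ (Gᶜ.Adj x y ∨ x = y) := by
    rw [← edist_le_one_iff_adj_or_eq]; exact not_le.mpr h
  rw [compl_adj] at hnear
  tauto

lemma adj_of_three_lt_edist_compl {u w x y : V} (h : 3 < Gᶜ.edist u w)
    (hx : Gᶜ.edist u x ≤ 1) (hy : Gᶜ.edist y w ≤ 1) : G.Adj x y := by
  refine adj_of_one_lt_edist_compl (lt_of_not_ge fun hxy => h.not_ge ?_)
  calc Gᶜ.edist u w ≤ Gᶜ.edist u x + Gᶜ.edist x y + Gᶜ.edist y w :=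
        (SimpleGraph.edist_triangle (v := y)).trans (by gcongr; exact SimpleGraph.edist_triangle)
    _ ≤ 1 + 1 + 1 := by gcongr
    _ = 3 := by norm_num

lemma connected_of_three_lt_edist_compl {u w : V} (h : 3 < Gᶜ.edist u w) : G.Connected := by
  have : Nonempty V := ⟨u⟩
  have huw : G.Adj u w := adj_of_three_lt_edist_compl h (edist_self_le_one u) (edist_self_le_one w)
  have hw : ∀ x, G.Reachable x w := fun x => by
    by_cases hx : Gᶜ.edist u x ≤ 1
    · exact (adj_of_three_lt_edist_compl h hx (edist_self_le_one w)).reachable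
    · exact (adj_of_one_lt_edist_compl (not_le.mp hx)).symm.reachable.trans huw.reachable
  exact ⟨fun x y => (hw x).trans (hw y).symm⟩

namespace FarPair

variable {u w x y : V}

variable (G) in
open Classical in
noncomputable def part (u w x : V) : Fin 5 :=
  if x = u then 0 else if x = w then 1 else if Gᶜ.edist u x ≤ 1 then 2
  else if Gᶜ.edist x w ≤ 1 then 3 else 4

-- The zero entries never occur on the paths used below.
def edgeColour : Fin 5 → Fin 5 → Fin 7 :=
  ![![0, 2, 0, 3, 4], ![2, 0, 4, 0, 3], ![0, 4, 0, 5, 0], ![3, 0, 5, 0, 0], ![4, 3, 0, 0, 0]]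

lemma edgeColour_comm (i j : Fin 5) : edgeColour i j = edgeColour j i := by
  revert i j; decide

variable (G) in
noncomputable def edgeColouring (u w : V) : Sym2 V → Fin 7 :=
  Sym2.lift ⟨fun x y => edgeColour (part G u w x) (part G u w y),
    fun _ _ => edgeColour_comm _ _⟩

variable (G) in
noncomputable def vertexColouring (u w x : V) : Fin 7 :=
  ![0, 1, 6, 6, 6] (part G u w x)

lemma edgeColouring_mk (x y : V) :
    edgeColouring G u w s(x, y) = edgeColour (part G u w x) (part G u w y) := rfl

lemma part_self_left : part G u w u = 0 := by simp [part]

lemma part_self_right (h : 3 < Gᶜ.edist u w) : part G u w w = 1 := by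
  have huw : u ≠ w :=
    (adj_of_three_lt_edist_compl h (edist_self_le_one u) (edist_self_le_one w)).ne
  simp [part, huw.symm]

lemma part_eq_two (hxu : x ≠ u) (hxw : x ≠ w) (hx : Gᶜ.edist u x ≤ 1) :
    part G u w x = 2 := by
  simp [part, hxu, hxw, hx]

lemma part_eq_three (h : 3 < Gᶜ.edist u w) (hxu : x ≠ u) (hxw : x ≠ w)
    (hx : Gᶜ.edist x w ≤ 1) : part G u w x = 3 := by
  have hux : ¬ Gᶜ.edist u x ≤ 1 := fun hux => (adj_of_three_lt_edist_compl h hux hx).ne rfl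
  simp [part, hxu, hxw, hx, hux]

lemma eq_of_part_eq_zero (hx : part G u w x = 0) : x = u := by
  unfold part at hx
  split_ifs at hx <;> simp_all

lemma eq_of_part_eq_one (hx : part G u w x = 1) : x = w := by
  unfold part at hx
  split_ifs at hx <;> simp_all

lemma edist_le_one_of_part_eq_two (hx : part G u w x = 2) : Gᶜ.edist u x ≤ 1 := by
  unfold part at hx
  split_ifs at hx <;> simp_all

lemma edist_le_one_of_part_eq_three (hx : part G u w x = 3) : Gᶜ.edist x w ≤ 1 := by
  unfold part at hx
  split_ifs at hx <;> simp_all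

lemma one_lt_edist_of_part_eq_four (hx : part G u w x = 4) :
    1 < Gᶜ.edist u x ∧ 1 < Gᶜ.edist x w := by
  unfold part at hx
  split_ifs at hx <;> simp_all

lemma adj_of_part_eq_four (hx : part G u w x = 4) (hy : part G u w y = 0 ∨ part G u w y = 1) :
    G.Adj x y := by
  rcases hy with hy | hy
  · rw [eq_of_part_eq_zero hy]
    exact (adj_of_one_lt_edist_compl (one_lt_edist_of_part_eq_four hx).1).symm
  · rw [eq_of_part_eq_one hy]
    exact adj_of_one_lt_edist_compl (one_lt_edist_of_part_eq_four hx).2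

variable (G u w) in
lemma part_cases (x : V) : part G u w x = 0 ∨ part G u w x = 1 ∨ part G u w x = 2 ∨
    part G u w x = 3 ∨ part G u w x = 4 := by
  generalize part G u w x = i
  fin_cases i <;> simp

lemma adj_of_part (h : 3 < Gᶜ.edist u w) (hx : part G u w x = 0 ∨ part G u w x = 2)
    (hy : part G u w y = 1 ∨ part G u w y = 3) : G.Adj x y := by
  refine adj_of_three_lt_edist_compl h ?_ ?_
  · rcases hx with hx | hx
    · rw [eq_of_part_eq_zero hx]; exact edist_self_le_one u
    · exact edist_le_one_of_part_eq_two hx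
  · rcases hy with hy | hy
    · rw [eq_of_part_eq_one hy]; exact edist_self_le_one w
    · exact edist_le_one_of_part_eq_three hy

lemma exists_compl_adj (h : 3 < Gᶜ.edist u w) (hr : Gᶜ.Reachable u w) :
    ∃ b, Gᶜ.Adj u b ∧ b ≠ w := by
  obtain ⟨p⟩ := hr
  cases p with
  | nil => exact absurd h (by simp)
  | cons hub _ =>
    refine ⟨_, hub, ?_⟩
    rintro rfl
    exact h.not_ge ((edist_eq_one_iff_adj.mpr hub).le.trans (by norm_num))

lemma exists_part_eq_two (h : 3 < Gᶜ.edist u w) (hr : Gᶜ.Reachable u w) :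
    ∃ b, part G u w b = 2 := by
  obtain ⟨b, hub, hbw⟩ := exists_compl_adj h hr
  exact ⟨b, part_eq_two hub.ne' hbw (edist_eq_one_iff_adj.mpr hub).le⟩

lemma exists_part_eq_three (h : 3 < Gᶜ.edist u w) (hr : Gᶜ.Reachable u w) :
    ∃ a, part G u w a = 3 := by
  rw [edist_comm] at h
  obtain ⟨a, hwa, hau⟩ := exists_compl_adj h hr.symm
  rw [edist_comm] at h
  exact ⟨a, part_eq_three h hau hwa.ne' (edist_eq_one_iff_adj.mpr hwa.symm).le⟩

lemma totalRainbowJoined_zero_two (h : 3 < Gᶜ.edist u w)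
    (hx : part G u w x = 0) (hy : part G u w y = 2) :
    G.TotalRainbowJoined (edgeColouring G u w) (vertexColouring G u w) x y := by
  have hw : part G u w w = 1 := part_self_right h
  refine ⟨.cons (adj_of_part h (.inl hx) (.inl hw)) <|
      .cons (adj_of_part h (.inr hy) (.inl hw)).symm .nil, ?_, ?_⟩ <;>
  simp [Walk.isPath_def, Walk.IsTotalRainbow, edgeColouring_mk, vertexColouring, edgeColour,
    ne_of_apply_ne (part G u w), hx, hy, hw]

lemma totalRainbowJoined_one_three (h : 3 < Gᶜ.edist u w)
    (hx : part G u w x = 1) (hy : part G u w y = 3) :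
    G.TotalRainbowJoined (edgeColouring G u w) (vertexColouring G u w) x y := by
  have hu : part G u w u = 0 := part_self_left
  refine ⟨.cons (adj_of_part h (.inl hu) (.inl hx)).symm <|
      .cons (adj_of_part h (.inl hu) (.inr hy)) .nil, ?_, ?_⟩ <;>
  simp [Walk.isPath_def, Walk.IsTotalRainbow, edgeColouring_mk, vertexColouring, edgeColour,
    ne_of_apply_ne (part G u w), hx, hy, hu]

lemma totalRainbowJoined_two_two (h : 3 < Gᶜ.edist u w) (hr : Gᶜ.Reachable u w)
    (hx : part G u w x = 2) (hy : part G u w y = 2) (hxy : x ≠ y) :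
    G.TotalRainbowJoined (edgeColouring G u w) (vertexColouring G u w) x y := by
  obtain ⟨a, ha⟩ := exists_part_eq_three h hr
  have hu : part G u w u = 0 := part_self_left
  have hw : part G u w w = 1 := part_self_right h
  refine ⟨.cons (adj_of_part h (.inr hx) (.inl hw)) <|
      .cons (adj_of_part h (.inl hu) (.inl hw)).symm <|
      .cons (adj_of_part h (.inl hu) (.inr ha)) <|
      .cons (adj_of_part h (.inr hy) (.inr ha)).symm .nil, ?_, ?_⟩ <;>
  simp [Walk.isPath_def, Walk.IsTotalRainbow, edgeColouring_mk, vertexColouring, edgeColour,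
    ne_of_apply_ne (part G u w), hxy, hx, hy, ha, hu, hw]

lemma totalRainbowJoined_two_four (h : 3 < Gᶜ.edist u w) (hr : Gᶜ.Reachable u w)
    (hx : part G u w x = 2) (hy : part G u w y = 4) :
    G.TotalRainbowJoined (edgeColouring G u w) (vertexColouring G u w) x y := by
  obtain ⟨a, ha⟩ := exists_part_eq_three h hr
  have hu : part G u w u = 0 := part_self_left
  refine ⟨.cons (adj_of_part h (.inr hx) (.inr ha)) <|
      .cons (adj_of_part h (.inl hu) (.inr ha)).symm <|
      .cons (adj_of_part_eq_four hy (.inl hu)).symm .nil, ?_, ?_⟩ <;>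
  simp [Walk.isPath_def, Walk.IsTotalRainbow, edgeColouring_mk, vertexColouring, edgeColour,
    ne_of_apply_ne (part G u w), hx, hy, ha, hu]

lemma totalRainbowJoined_three_three (h : 3 < Gᶜ.edist u w) (hr : Gᶜ.Reachable u w)
    (hx : part G u w x = 3) (hy : part G u w y = 3) (hxy : x ≠ y) :
    G.TotalRainbowJoined (edgeColouring G u w) (vertexColouring G u w) x y := by
  obtain ⟨b, hb⟩ := exists_part_eq_two h hr
  have hu : part G u w u = 0 := part_self_left
  have hw : part G u w w = 1 := part_self_right h
  refine ⟨.cons (adj_of_part h (.inl hu) (.inr hx)).symm <|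
      .cons (adj_of_part h (.inl hu) (.inl hw)) <|
      .cons (adj_of_part h (.inr hb) (.inl hw)).symm <|
      .cons (adj_of_part h (.inr hb) (.inr hy)) .nil, ?_, ?_⟩ <;>
  simp [Walk.isPath_def, Walk.IsTotalRainbow, edgeColouring_mk, vertexColouring, edgeColour,
    ne_of_apply_ne (part G u w), hxy, hx, hy, hb, hu, hw]

lemma totalRainbowJoined_three_four (h : 3 < Gᶜ.edist u w) (hr : Gᶜ.Reachable u w)
    (hx : part G u w x = 3) (hy : part G u w y = 4) :
    G.TotalRainbowJoined (edgeColouring G u w) (vertexColouring G u w) x y := by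
  obtain ⟨b, hb⟩ := exists_part_eq_two h hr
  have hw : part G u w w = 1 := part_self_right h
  refine ⟨.cons (adj_of_part h (.inr hb) (.inr hx)).symm <|
      .cons (adj_of_part h (.inr hb) (.inl hw)) <|
      .cons (adj_of_part_eq_four hy (.inr hw)).symm .nil, ?_, ?_⟩ <;>
  simp [Walk.isPath_def, Walk.IsTotalRainbow, edgeColouring_mk, vertexColouring, edgeColour,
    ne_of_apply_ne (part G u w), hx, hy, hb, hw]

lemma totalRainbowJoined_four_four (h : 3 < Gᶜ.edist u w)
    (hx : part G u w x = 4) (hy : part G u w y = 4) (hxy : x ≠ y) :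
    G.TotalRainbowJoined (edgeColouring G u w) (vertexColouring G u w) x y := by
  have hu : part G u w u = 0 := part_self_left
  have hw : part G u w w = 1 := part_self_right h
  refine ⟨.cons (adj_of_part_eq_four hx (.inl hu)) <|
      .cons (adj_of_part h (.inl hu) (.inl hw)) <|
      .cons (adj_of_part_eq_four hy (.inr hw)).symm .nil, ?_, ?_⟩ <;>
  simp [Walk.isPath_def, Walk.IsTotalRainbow, edgeColouring_mk, vertexColouring, edgeColour,
    ne_of_apply_ne (part G u w), hxy, hx, hy, hu, hw]

lemma totalRainbowJoined (h : 3 < Gᶜ.edist u w) (hr : Gᶜ.Reachable u w) (hxy : x ≠ y) :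
    G.TotalRainbowJoined (edgeColouring G u w) (vertexColouring G u w) x y := by
  wlog hle : part G u w x ≤ part G u w y generalizing x y
  · exact (this hxy.symm (le_of_not_ge hle)).symm
  rcases part_cases G u w x with hx | hx | hx | hx | hx <;>
  rcases part_cases G u w y with hy | hy | hy | hy | hy <;>
  simp only [hx, hy, Fin.reduceLE] at hle
  · exact absurd ((eq_of_part_eq_zero hx).trans (eq_of_part_eq_zero hy).symm) hxy
  · exact (adj_of_part h (.inl hx) (.inl hy)).totalRainbowJoined
  · exact totalRainbowJoined_zero_two h hx hy
  · exact (adj_of_part h (.inl hx) (.inr hy)).totalRainbowJoined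
  · exact (adj_of_part_eq_four hy (.inl hx)).symm.totalRainbowJoined
  · exact absurd ((eq_of_part_eq_one hx).trans (eq_of_part_eq_one hy).symm) hxy
  · exact (adj_of_part h (.inr hy) (.inl hx)).symm.totalRainbowJoined
  · exact totalRainbowJoined_one_three h hx hy
  · exact (adj_of_part_eq_four hy (.inr hx)).symm.totalRainbowJoined
  · exact totalRainbowJoined_two_two h hr hx hy hxy
  · exact (adj_of_part h (.inr hx) (.inr hy)).totalRainbowJoined
  · exact totalRainbowJoined_two_four h hr hx hy
  · exact totalRainbowJoined_three_three h hr hx hy hxy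
  · exact totalRainbowJoined_three_four h hr hx hy
  · exact totalRainbowJoined_four_four h hx hy hxy

end FarPair

theorem trc_le_seven_of_three_lt_edist_compl {u w : V} (h : 3 < Gᶜ.edist u w)
    (hr : Gᶜ.Reachable u w) : trc G ≤ 7 :=
  Nat.sInf_le ⟨_, _, fun _ _ hxy => FarPair.totalRainbowJoined h hr hxy⟩

end SimpleGraph

theorem stmt_14_general {V : Type*} (G : SimpleGraph V)
    (hdiam : 3 < Gᶜ.diam) :
    G.Connected ∧ trc G ≤ 7 := by
  have : Nonempty V := (nontrivial_of_diam_ne_zero (G := Gᶜ) (by omega)).to_nonempty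
  obtain ⟨u, w, huw⟩ := Gᶜ.exists_dist_eq_diam
  have hr : Gᶜ.Reachable u w := .of_dist_ne_zero (by omega)
  have h : 3 < Gᶜ.edist u w := by rw [← hr.coe_dist_eq_edist, huw]; exact_mod_cast hdiam
  exact ⟨connected_of_three_lt_edist_compl h, trc_le_seven_of_three_lt_edist_compl h hr⟩

theorem stmt_14 {V : Type*} [Fintype V] (G : SimpleGraph V)
    (hcconn : Gᶜ.Connected) (hdiam : 3 < Gᶜ.diam) :
    G.Connected ∧ trc G ≤ 7 :=
  stmt_14_general G hdiam
end

section
/- Let $G$ be a bridgeless graph of diameter $2$. Then either $G$ is $2$-connected, or $G$ has exactly one cut vertex $v$; in the latter case $v$ is adjacent to every other vertex of $G$ (so $G$ has radius $1$ with center $v$). -/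
/-!
If `G - v` is disconnected, every vertex `w ≠ v` has a vertex in another component of `G - v`.
A walk of length at most two between them must pass through `v`, so `v` is adjacent to `w`.
A second cut vertex `w` would likewise be adjacent to every other vertex, and then `G - v`
would stay connected through `w`.
-/

open SimpleGraph

/-- `G` is 2-connected: it has at least 3 vertices and removing any single
vertex leaves it connected. -/
def IsTwoConnected {V : Type*} [Fintype V] (G : SimpleGraph V) : Prop :=
  3 ≤ Fintype.card V ∧ ∀ v : V, (G.induce ({v}ᶜ : Set V)).Connected

namespace SimpleGraph

variable {V : Type*} {G : SimpleGraph V}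

lemma eq_or_adj_or_exists_adj_adj_of_edist_le_two {u w : V} (h : G.edist u w ≤ 2) :
    u = w ∨ G.Adj u w ∨ ∃ m, G.Adj u m ∧ G.Adj m w := by
  rcases h.lt_or_eq with hlt | h2
  · rcases edist_le_one_iff_adj_or_eq.mp (Order.le_of_lt_add_one hlt) with hadj | heq
    exacts [.inr (.inl hadj), .inl heq]
  · obtain ⟨-, -, m, hm⟩ := edist_eq_two_iff.mp h2
    rw [mem_commonNeighbors] at hm
    exact .inr (.inr ⟨m, hm.1, hm.2.symm⟩)

lemma adj_of_not_reachable_induce_compl {v x y : V} (hx : x ≠ v) (hy : y ≠ v)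
    (hxy : G.edist x y ≤ 2)
    (hsep : ¬ (G.induce ({v}ᶜ : Set V)).Reachable ⟨x, hx⟩ ⟨y, hy⟩) : G.Adj v x := by
  rcases eq_or_adj_or_exists_adj_adj_of_edist_le_two hxy with rfl | hadj | ⟨m, hxm, hmy⟩
  · exact (hsep .rfl).elim
  · exact (hsep (show (G.induce ({v}ᶜ : Set V)).Adj ⟨x, hx⟩ ⟨y, hy⟩ from hadj).reachable).elim
  · by_cases hm : m = v
    · exact hm ▸ hxm.symm
    · have hxm' : (G.induce ({v}ᶜ : Set V)).Adj ⟨x, hx⟩ ⟨m, hm⟩ := hxm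
      have hmy' : (G.induce ({v}ᶜ : Set V)).Adj ⟨m, hm⟩ ⟨y, hy⟩ := hmy
      exact (hsep (hxm'.reachable.trans hmy'.reachable)).elim

lemma adj_of_not_connected_induce_compl (hG : G.ediam ≤ 2) {v : V}
    (hv : ¬ (G.induce ({v}ᶜ : Set V)).Connected) {w : V} (hw : w ≠ v) : G.Adj v w := by
  have : Nonempty ({v}ᶜ : Set V) := ⟨⟨w, hw⟩⟩
  obtain ⟨a, b, hab⟩ : ∃ a b, ¬ (G.induce ({v}ᶜ : Set V)).Reachable a b := by
    by_contra! h
    exact hv ⟨h⟩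
  have hsep : ∃ z : ({v}ᶜ : Set V), ¬ (G.induce ({v}ᶜ : Set V)).Reachable ⟨w, hw⟩ z := by
    by_contra! h
    exact hab ((h a).symm.trans (h b))
  obtain ⟨⟨z, hz⟩, hwz⟩ := hsep
  exact adj_of_not_reachable_induce_compl hw hz (edist_le_ediam.trans hG) hwz

lemma connected_induce_compl_of_forall_adj {u v : V} (huv : u ≠ v)
    (hu : ∀ w, w ≠ u → G.Adj u w) : (G.induce ({v}ᶜ : Set V)).Connected := by
  have hreach : ∀ x : ({v}ᶜ : Set V), (G.induce ({v}ᶜ : Set V)).Reachable ⟨u, huv⟩ x := by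
    rintro ⟨x, hx⟩
    by_cases hxu : x = u
    · subst hxu; rfl
    · exact (show (G.induce ({v}ᶜ : Set V)).Adj ⟨u, huv⟩ ⟨x, hx⟩ from hu x hxu).reachable
  have : Nonempty ({v}ᶜ : Set V) := ⟨⟨u, huv⟩⟩
  exact ⟨fun a b => (hreach a).symm.trans (hreach b)⟩

lemma ediam_eq_of_diam_eq {n : ℕ} (hn : n ≠ 0) (h : G.diam = n) : G.ediam = n := by
  rw [← h, diam, ENat.natCast_toNat (G.ediam_ne_top_of_diam_ne_zero (h ▸ hn))]

lemma three_le_card_of_ediam_eq_two [Fintype V] (hG : G.ediam = 2) : 3 ≤ Fintype.card V := by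
  have : Nontrivial V := G.nontrivial_of_ediam_ne_zero (by simp [hG])
  obtain ⟨u, w, huw⟩ := G.exists_edist_eq_ediam_of_ne_top (by simp [hG])
  obtain ⟨hne, -, m, hm⟩ := edist_eq_two_iff.mp (huw.trans hG)
  rw [mem_commonNeighbors] at hm
  exact Fintype.two_lt_card_iff.mpr ⟨u, m, w, hm.1.ne, hne, hm.2.ne.symm⟩

end SimpleGraph

theorem stmt_15_general {V : Type*} [Fintype V] (G : SimpleGraph V)
    (hconn : G.Connected)
    (hdiam : G.diam = 2) :
    IsTwoConnected G ∨
      ∃ v : V, IsCutVertex G v ∧ (∀ w : V, IsCutVertex G w → w = v) ∧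
        ∀ w : V, w ≠ v → G.Adj v w := by
  have hediam : G.ediam = 2 := ediam_eq_of_diam_eq two_ne_zero hdiam
  by_cases h2c : ∀ v : V, (G.induce ({v}ᶜ : Set V)).Connected
  · exact .inl ⟨three_le_card_of_ediam_eq_two hediam, h2c⟩
  obtain ⟨v, hv⟩ := not_forall.mp h2c
  refine .inr ⟨v, ⟨hconn, hv⟩, fun w hw => ?_,
    fun w => adj_of_not_connected_induce_compl hediam.le hv⟩
  by_contra hwv
  exact hv (connected_induce_compl_of_forall_adj hwv
    fun x => adj_of_not_connected_induce_compl hediam.le hw.2)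

theorem stmt_15 {V : Type*} [Fintype V] (G : SimpleGraph V)
    (hconn : G.Connected) (hbridgeless : ∀ e : Sym2 V, ¬ G.IsBridge e)
    (hdiam : G.diam = 2) :
    IsTwoConnected G ∨
      ∃ v : V, IsCutVertex G v ∧ (∀ w : V, IsCutVertex G w → w = v) ∧
        ∀ w : V, w ≠ v → G.Adj v w :=
  stmt_15_general G hconn hdiam
end

section
/- Let $G$ be a connected graph on $n$ vertices with $diam(G) = 3$ whose complement $\overline{G}$ is also connected. Then $trc(\overline{G}) \leq n + 1$, with equality if and only if $\overline{G}$ is isomorphic to a double star. -/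
open SimpleGraph

/-!
If `dist_G(x, y) = 3`, then no other vertex is a common `G`-neighbour of `x` and `y`, so `xy` is
an edge of `Gᶜ` dominating all other vertices. Colour every vertex with its own colour, every edge
from `x` or `y` to another vertex `w` with the colour of `w`, and `xy` with one extra colour: any
two vertices are then joined through `x` or `y` by a total-rainbow path of length at most three,
so `n + 1` colours suffice. If some neighbour `a ≠ y` of `x` has a further neighbour `b ≠ x`, the
extra colour can be saved by giving `xy` the colour of `a` and `xa` the colour of `b`; such `a`,
`b` also yield three vertices of degree at least two, which a double star does not have.
Otherwise `Gᶜ` is a double star with centres `x` and `y`, with leaves on both sides because `x`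
and `y` have `G`-neighbours. In a tree all paths are forced, and the paths `u - x - y - v` make
the `n - 2` leaf edges, the edge `xy` and the two centres carry `n + 1` distinct colours.
-/

namespace SimpleGraph

variable {V : Type*} {H : SimpleGraph V} {α : Type*}

namespace Walk

def IsTotalRainbow_s16 (cE : Sym2 V → α) (cV : V → α) {u v : V} (p : H.Walk u v) : Prop :=
  (p.edges.map cE ++ p.support.tail.dropLast.map cV).Nodup

variable {cE : Sym2 V → α} {cV : V → α} {u v w z : V}

lemma isTotalRainbow_reverse {p : H.Walk u v} :
    p.reverse.IsTotalRainbow_s16 cE cV ↔ p.IsTotalRainbow_s16 cE cV := by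
  rw [IsTotalRainbow_s16, IsTotalRainbow_s16, edges_reverse, support_reverse, List.tail_reverse,
    List.dropLast_reverse, List.tail_dropLast, List.map_reverse, List.map_reverse]
  exact ((List.reverse_perm _).append (List.reverse_perm _)).nodup_iff

lemma IsTotalRainbow_s16.comp {β : Type*} {f : α → β} (hf : Function.Injective f)
    {p : H.Walk u v} (hp : p.IsTotalRainbow_s16 cE cV) : p.IsTotalRainbow_s16 (f ∘ cE) (f ∘ cV) := by
  simpa [IsTotalRainbow_s16] using hp.map hf

@[simp]
lemma isTotalRainbow_cons_nil (h : H.Adj u v) : (cons h nil).IsTotalRainbow_s16 cE cV := by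
  simp [IsTotalRainbow_s16]

@[simp]
lemma isTotalRainbow_cons_cons_nil (h : H.Adj u w) (h' : H.Adj w v) :
    (cons h (cons h' nil)).IsTotalRainbow_s16 cE cV ↔ [cE s(u, w), cE s(w, v), cV w].Nodup := by
  simp [IsTotalRainbow_s16]

@[simp]
lemma isTotalRainbow_cons_cons_cons_nil (h : H.Adj u w) (h' : H.Adj w z) (h'' : H.Adj z v) :
    (cons h (cons h' (cons h'' nil))).IsTotalRainbow_s16 cE cV ↔
      [cE s(u, w), cE s(w, z), cE s(z, v), cV w, cV z].Nodup := by
  simp [IsTotalRainbow_s16]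

end Walk

lemma exists_isTRCColoring_of_card_eq [Fintype α] {k : ℕ} (hk : Fintype.card α = k)
    (cE : Sym2 V → α) (cV : V → α)
    (h : ∀ u v, u ≠ v → ∃ p : H.Walk u v, p.IsPath ∧ p.IsTotalRainbow_s16 cE cV) :
    ∃ (cE' : Sym2 V → Fin k) (cV' : V → Fin k), IsTRCColoring H cE' cV' := by
  let e := Fintype.equivFinOfCardEq hk
  refine ⟨e ∘ cE, e ∘ cV, fun u v huv => ?_⟩
  obtain ⟨p, hp, hr⟩ := h u v huv
  exact ⟨p, hp, hr.comp e.injective⟩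

lemma le_trc {m : ℕ}
    (hne : ∃ (k : ℕ) (cE : Sym2 V → Fin k) (cV : V → Fin k), IsTRCColoring H cE cV)
    (h : ∀ (k : ℕ) (cE : Sym2 V → Fin k) (cV : V → Fin k), IsTRCColoring H cE cV → m ≤ k) :
    m ≤ trc H := by
  obtain ⟨cE, cV, hc⟩ :=
    Nat.sInf_mem (s := {k | ∃ (cE : Sym2 V → Fin k) (cV : V → Fin k), IsTRCColoring H cE cV}) hne
  exact h _ cE cV hc

lemma IsTree.isTotalRainbow_of_isTRCColoring {k : ℕ} {cE : Sym2 V → Fin k} {cV : V → Fin k}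
    (hH : H.IsTree) (hc : IsTRCColoring H cE cV) {u v : V} (huv : u ≠ v) {p : H.Walk u v}
    (hp : p.IsPath) : p.IsTotalRainbow_s16 cE cV := by
  obtain ⟨q, hq, hr⟩ := hc u v huv
  obtain rfl := (hH.existsUnique_path u v).unique hp hq
  exact hr

lemma IsTree.color_ne_of_adj_of_adj {k : ℕ} {cE : Sym2 V → Fin k} {cV : V → Fin k}
    (hH : H.IsTree) (hc : IsTRCColoring H cE cV) {w w' c : V} (hw : H.Adj w c)
    (hw' : H.Adj w' c) (hww' : w ≠ w') : cE s(w, c) ≠ cE s(w', c) := by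
  have := hH.isTotalRainbow_of_isTRCColoring hc hww' (p := .cons hw (.cons hw'.symm .nil))
    (by simp [hw.ne, hww', hw'.ne'])
  simp only [Walk.isTotalRainbow_cons_cons_nil, List.nodup_cons, List.mem_cons] at this
  rw [Sym2.eq_swap (a := c)] at this
  tauto

lemma one_lt_degree_of_adj_of_adj {v a b : V} [Fintype (H.neighborSet v)] (ha : H.Adj v a)
    (hb : H.Adj v b) (hab : a ≠ b) : 1 < H.degree v := by
  rw [← card_neighborFinset_eq_degree]
  exact Finset.one_lt_card.2 ⟨a, by simpa, b, by simpa, hab⟩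

lemma IsDoubleStar.false_of_one_lt_degree [Fintype V] [DecidableEq V] [DecidableRel H.Adj]
    (hH : IsDoubleStar H) {p q r : V} (hp : 1 < H.degree p) (hq : 1 < H.degree q)
    (hr : 1 < H.degree r) (hpq : p ≠ q) (hpr : p ≠ r) (hqr : q ≠ r) : False := by
  obtain ⟨-, u, v, -, hdeg⟩ := hH
  have hcentre : ∀ w, 1 < H.degree w → w = u ∨ w = v := fun w hw => by
    by_contra! h
    exact hw.ne' (hdeg w h.1 h.2)
  rcases hcentre p hp with rfl | rfl <;> rcases hcentre q hq with rfl | rfl <;>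
    rcases hcentre r hr with rfl | rfl <;> simp_all

def IsDominatingEdge (H : SimpleGraph V) (x y : V) : Prop :=
  H.Adj x y ∧ ∀ w, w ≠ x → w ≠ y → H.Adj w x ∨ H.Adj w y

namespace IsDominatingEdge

variable {x y : V}

lemma symm (h : H.IsDominatingEdge x y) : H.IsDominatingEdge y x :=
  ⟨h.1.symm, fun w hy hx => (h.2 w hx hy).symm⟩

theorem exists_isTotalRainbow_path (h : H.IsDominatingEdge x y) (cE : Sym2 V → α) (cV : V → α)
    (hx : ∀ u v, u ≠ v → ¬ H.Adj u v → H.Adj u x → H.Adj v x →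
      [cE s(u, x), cE s(x, v), cV x].Nodup)
    (hy : ∀ u v, u ≠ v → ¬ H.Adj u v → H.Adj u y → H.Adj v y →
      [cE s(u, y), cE s(y, v), cV y].Nodup)
    (hxy : ∀ u v, ¬ H.Adj u v → H.Adj u x → H.Adj v y → ¬ H.Adj u y → ¬ H.Adj v x →
      [cE s(u, x), cE s(x, y), cE s(y, v), cV x, cV y].Nodup)
    (u v : V) (huv : u ≠ v) : ∃ p : H.Walk u v, p.IsPath ∧ p.IsTotalRainbow_s16 cE cV := by
  by_cases hadj : H.Adj u v
  · exact ⟨.cons hadj .nil, by simp [huv], by simp⟩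
  by_cases hcx : H.Adj u x ∧ H.Adj v x
  · exact ⟨.cons hcx.1 (.cons hcx.2.symm .nil), by simp [huv, hcx.1.ne, hcx.2.ne'],
      by simpa using hx u v huv hadj hcx.1 hcx.2⟩
  by_cases hcy : H.Adj u y ∧ H.Adj v y
  · exact ⟨.cons hcy.1 (.cons hcy.2.symm .nil), by simp [huv, hcy.1.ne, hcy.2.ne'],
      by simpa using hy u v huv hadj hcy.1 hcy.2⟩
  have cross : ∀ u v, ¬ H.Adj u v → H.Adj u x → H.Adj v y → ¬ H.Adj u y → ¬ H.Adj v x →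
      (∃ p : H.Walk u v, p.IsPath ∧ p.IsTotalRainbow_s16 cE cV) ∧
        ∃ p : H.Walk v u, p.IsPath ∧ p.IsTotalRainbow_s16 cE cV := by
    intro u v hadj hu hv hnu hnv
    have hr := hxy u v hadj hu hv hnu hnv
    have huy : u ≠ y := by rintro rfl; exact hadj hv.symm
    have hvx : v ≠ x := by rintro rfl; exact hadj hu
    have huv : u ≠ v := by rintro rfl; exact hnv hu
    have hp : (Walk.cons hu (.cons h.1 (.cons hv.symm .nil))).IsPath := by
      simp [hu.ne, hv.ne', h.1.ne, huy, hvx.symm, huv]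
    exact ⟨⟨_, hp, by simpa using hr⟩,
      ⟨_, hp.reverse, Walk.isTotalRainbow_reverse.2 (by simpa using hr)⟩⟩
  have hside : ∀ w, H.Adj w x ∨ H.Adj w y ∨ w = x ∨ w = y := fun w => by
    by_cases hwx : w = x <;> by_cases hwy : w = y <;> have := h.2 w <;> tauto
  rcases hside u with hu | hu | rfl | rfl <;> rcases hside v with hv | hv | rfl | rfl
  -- all other combinations make `u`, `v` adjacent or give them a common neighbour
  all_goals first
    | exact (cross u v hadj hu hv (fun h' => hcy ⟨h', hv⟩) (fun h' => hcx ⟨hu, h'⟩)).1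
    | exact (cross v u (fun h' => hadj h'.symm) hv hu (fun h' => hcy ⟨hu, h'⟩)
        (fun h' => hcx ⟨h', hv⟩)).2
    | clear hside cross; have := h.1; simp_all [adj_comm]

theorem not_isDoubleStar [Fintype V] [DecidableEq V] [DecidableRel H.Adj]
    (h : H.IsDominatingEdge x y) {a b : V} (hxa : H.Adj x a) (hab : H.Adj a b) (hay : a ≠ y)
    (hbx : b ≠ x) : ¬ IsDoubleStar H := by
  intro hH
  have hx := one_lt_degree_of_adj_of_adj h.1 hxa hay.symm
  have ha := one_lt_degree_of_adj_of_adj hxa.symm hab hbx.symm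
  by_cases hby : b = y
  · subst hby
    exact hH.false_of_one_lt_degree hx ha (one_lt_degree_of_adj_of_adj h.1.symm hab.symm hxa.ne)
      hxa.ne h.1.ne hay
  rcases h.2 b hbx hby with hb | hb
  · exact hH.false_of_one_lt_degree hx ha (one_lt_degree_of_adj_of_adj hb hab.symm hxa.ne)
      hxa.ne hbx.symm hab.ne
  · exact hH.false_of_one_lt_degree hx ha (one_lt_degree_of_adj_of_adj h.1.symm hb.symm hbx.symm)
      hxa.ne h.1.ne hay

end IsDominatingEdge

section LeafEdgeColoring

variable [DecidableEq V]

def leafEdgeColoring (x y : V) (ι : V → α) (χ : α) : Sym2 V → α :=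
  Sym2.lift ⟨fun a b => if a = x ∨ a = y then (if b = x ∨ b = y then χ else ι b)
    else if b = x ∨ b = y then ι a else χ, fun a b => by dsimp only; split_ifs <;> rfl⟩

@[simp]
lemma leafEdgeColoring_mk (x y : V) (ι : V → α) (χ : α) (a b : V) :
    leafEdgeColoring x y ι χ s(a, b) = if a = x ∨ a = y then (if b = x ∨ b = y then χ else ι b)
      else if b = x ∨ b = y then ι a else χ := rfl

namespace IsDominatingEdge

variable {x y : V}

theorem exists_isTRCColoring_card_add_one [Fintype V] (h : H.IsDominatingEdge x y) :
    ∃ (cE : Sym2 V → Fin (Fintype.card V + 1)) (cV : V → Fin (Fintype.card V + 1)),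
      IsTRCColoring H cE cV := by
  refine exists_isTRCColoring_of_card_eq Fintype.card_option (leafEdgeColoring x y some none) some
    (h.exists_isTotalRainbow_path _ _ ?_ ?_ ?_)
  all_goals
    intros
    simp only [leafEdgeColoring_mk, List.nodup_cons, List.mem_cons, List.not_mem_nil,
      List.nodup_nil]
    grind [Adj.symm, Adj.ne, h.1]

theorem trc_le_card_of_adj_of_adj [Fintype V] (h : H.IsDominatingEdge x y) {a b : V}
    (hxa : H.Adj x a) (hab : H.Adj a b) (hay : a ≠ y) (hbx : b ≠ x) : trc H ≤ Fintype.card V := by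
  refine Nat.sInf_le (exists_isTRCColoring_of_card_eq rfl
    (Function.update (leafEdgeColoring x y id a) s(x, a) b) id
    (h.exists_isTotalRainbow_path _ _ ?_ ?_ ?_))
  all_goals
    intros
    simp only [Function.update_apply, Sym2.eq_iff, leafEdgeColoring_mk, id, List.nodup_cons,
      List.mem_cons, List.not_mem_nil, List.nodup_nil]
    grind [Adj.symm, Adj.ne, h.1]

end IsDominatingEdge

end LeafEdgeColoring

lemma card_add_one_le_card_of_injOn_compl_pair {β : Type*} [Fintype V] [Fintype β] (x y : V)
    (e ex ey : β) (ℓ : V → β) (he : e ≠ ex ∧ e ≠ ey ∧ ex ≠ ey)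
    (hℓ : ∀ w, w ≠ x → w ≠ y → ℓ w ≠ e ∧ ℓ w ≠ ex ∧ ℓ w ≠ ey)
    (hinj : ∀ w w', w ≠ x → w ≠ y → w' ≠ x → w' ≠ y → w ≠ w' → ℓ w ≠ ℓ w') :
    Fintype.card V + 1 ≤ Fintype.card β := by
  classical
  refine (Fintype.card_option (α := V)).symm.le.trans (Fintype.card_le_of_injective
    (fun o => o.elim e fun w => if w = x then ex else if w = y then ey else ℓ w) ?_)
  rintro (_ | w) (_ | w') heq <;> simp only [Option.elim] at heq
  all_goals grind

def IsDoubleStarWithCenters (H : SimpleGraph V) (x y : V) : Prop :=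
  H.Adj x y ∧ ∀ w, w ≠ x → w ≠ y → H.neighborSet w = {x} ∨ H.neighborSet w = {y}

theorem IsDominatingEdge.isDoubleStarWithCenters {x y : V} (h : H.IsDominatingEdge x y)
    (hx : ∀ a b, H.Adj x a → H.Adj a b → a ≠ y → b = x)
    (hy : ∀ a b, H.Adj y a → H.Adj a b → a ≠ x → b = y) : H.IsDoubleStarWithCenters x y := by
  refine ⟨h.1, fun w hwx hwy => ?_⟩
  rcases h.2 w hwx hwy with hw | hw
  · exact Or.inl (Set.eq_singleton_iff_unique_mem.2 ⟨hw, fun z hz => hx w z hw.symm hz hwy⟩)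
  · exact Or.inr (Set.eq_singleton_iff_unique_mem.2 ⟨hw, fun z hz => hy w z hw.symm hz hwx⟩)

namespace IsDoubleStarWithCenters

variable {x y w c c' : V}

lemma neighborSet_eq (h : H.IsDoubleStarWithCenters x y) (hwx : w ≠ x) (hwy : w ≠ y)
    (hc : H.Adj w c) : H.neighborSet w = {c} := by
  have hc' : c ∈ H.neighborSet w := hc
  rcases h.2 w hwx hwy with hN | hN <;> rw [hN] at hc' ⊢ <;> rw [hc']

lemma eq_of_adj (h : H.IsDoubleStarWithCenters x y) (hwx : w ≠ x) (hwy : w ≠ y)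
    (hc : H.Adj w c) (hc' : H.Adj w c') : c' = c := by
  have : c' ∈ H.neighborSet w := hc'
  rwa [h.neighborSet_eq hwx hwy hc] at this

lemma adj_or_adj (h : H.IsDoubleStarWithCenters x y) (hwx : w ≠ x) (hwy : w ≠ y) :
    H.Adj w x ∨ H.Adj w y := by
  rcases h.2 w hwx hwy with hN | hN
  · exact Or.inl (hN.symm ▸ rfl : x ∈ H.neighborSet w)
  · exact Or.inr (hN.symm ▸ rfl : y ∈ H.neighborSet w)

lemma connected (h : H.IsDoubleStarWithCenters x y) : H.Connected := by
  refine (connected_iff_exists_forall_reachable H).2 ⟨x, fun w => ?_⟩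
  by_cases hwx : w = x
  · exact hwx ▸ Reachable.rfl
  by_cases hwy : w = y
  · exact hwy ▸ h.1.reachable
  rcases h.adj_or_adj hwx hwy with hw | hw
  · exact hw.symm.reachable
  · exact h.1.reachable.trans hw.symm.reachable

lemma adj_ite [DecidableRel H.Adj] (h : H.IsDoubleStarWithCenters x y) (hwx : w ≠ x) :
    H.Adj w (if H.Adj w x then x else y) := by
  split_ifs with hw
  · exact hw
  by_cases hwy : w = y
  · exact absurd (hwy ▸ h.1.symm) hw
  · exact (h.adj_or_adj hwx hwy).resolve_left hw

theorem card_edgeSet_add_one [Finite V] (h : H.IsDoubleStarWithCenters x y) :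
    Nat.card H.edgeSet + 1 = Nat.card V := by
  classical
  -- every `w ≠ x` owns the edge to its neighbour `p w` on the way to `x`
  let p : V → V := fun w => if H.Adj w x then x else y
  have hpy : p y = x := by simp [p, h.1.symm]
  have hbij : Function.Bijective
      fun w : {w // w ≠ x} => (⟨s(w, p w), h.adj_ite w.2⟩ : H.edgeSet) := by
    constructor
    · rintro ⟨w, hwx⟩ ⟨w', hw'x⟩ heq
      have heq' : s(w, p w) = s(w', p w') := congrArg Subtype.val heq
      rw [Sym2.eq_iff] at heq'
      refine Subtype.ext (heq'.elim And.left fun ⟨hw, hw'⟩ => ?_)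
      have : p w = x ∨ p w = y := by unfold p; split_ifs <;> simp
      rcases this with h' | h'
      · exact absurd (hw'.symm.trans h') hw'x
      · exact absurd (hw.trans (by rw [← hw', h', hpy])) hwx
    · rintro ⟨e, he⟩
      induction e using Sym2.ind with | _ u v => ?_
      rw [mem_edgeSet] at he
      by_cases hu : u ≠ x ∧ u ≠ y
      · exact ⟨⟨u, hu.1⟩, by simp [p, h.eq_of_adj hu.1 hu.2 (h.adj_ite hu.1) he]⟩
      by_cases hv : v ≠ x ∧ v ≠ y
      · exact ⟨⟨v, hv.1⟩, by simp [p, h.eq_of_adj hv.1 hv.2 (h.adj_ite hv.1) he.symm, Sym2.eq_swap]⟩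
      refine ⟨⟨y, h.1.ne'⟩, ?_⟩
      have := he.ne
      have := h.1.ne
      simp only [hpy, Subtype.mk.injEq, Sym2.eq_iff]
      grind
  have := Fintype.ofFinite V
  have : 0 < Fintype.card V := Fintype.card_pos_iff.2 ⟨x⟩
  rw [← Nat.card_eq_of_bijective _ hbij, Nat.card_eq_fintype_card, Nat.card_eq_fintype_card]
  simp only [ne_eq, Fintype.card_subtype_compl, Fintype.card_unique]
  omega

theorem isTree [Finite V] (h : H.IsDoubleStarWithCenters x y) : H.IsTree :=
  isTree_iff_connected_and_card.2 ⟨h.connected, h.card_edgeSet_add_one⟩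

theorem isDoubleStar [Fintype V] [DecidableEq V] [DecidableRel H.Adj]
    (h : H.IsDoubleStarWithCenters x y) : IsDoubleStar H := by
  refine ⟨h.isTree, x, y, h.1, fun w hwx hwy => degree_eq_one_iff_existsUnique_adj.2 ?_⟩
  obtain ⟨c, hc⟩ : ∃ c, H.Adj w c := (h.adj_or_adj hwx hwy).elim (⟨x, ·⟩) (⟨y, ·⟩)
  exact ⟨c, hc, fun c' hc' => h.eq_of_adj hwx hwy hc hc'⟩

lemma nodup_of_isTRCColoring [Finite V] (h : H.IsDoubleStarWithCenters x y) {k : ℕ}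
    {cE : Sym2 V → Fin k} {cV : V → Fin k} (hc : IsTRCColoring H cE cV) {u v : V}
    (hu : H.Adj u x) (huy : u ≠ y) (hv : H.Adj v y) (hvx : v ≠ x) :
    [cE s(u, x), cE s(x, y), cE s(v, y), cV x, cV y].Nodup := by
  have huv : u ≠ v := by rintro rfl; exact h.1.ne (h.eq_of_adj hu.ne huy hu hv).symm
  simpa [Sym2.eq_swap] using h.isTree.isTotalRainbow_of_isTRCColoring hc huv
    (p := .cons hu (.cons h.1 (.cons hv.symm .nil)))
    (by simp [hu.ne, huy, huv, h.1.ne, hvx.symm, hv.ne'])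

theorem card_add_one_le [Fintype V] (h : H.IsDoubleStarWithCenters x y) {a b : V}
    (ha : H.Adj a x) (hay : a ≠ y) (hb : H.Adj b y) (hbx : b ≠ x) {k : ℕ}
    {cE : Sym2 V → Fin k} {cV : V → Fin k} (hc : IsTRCColoring H cE cV) :
    Fintype.card V + 1 ≤ k := by
  classical
  let ℓ : V → Fin k := fun w => if H.Adj w x then cE s(w, x) else cE s(w, y)
  have hℓ : ∀ w, w ≠ x → w ≠ y →
      (H.Adj w x ∧ ℓ w = cE s(w, x)) ∨ (H.Adj w y ∧ ℓ w = cE s(w, y)) := by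
    intro w hwx hwy
    by_cases hw : H.Adj w x
    · exact Or.inl ⟨hw, if_pos hw⟩
    · exact Or.inr ⟨(h.adj_or_adj hwx hwy).resolve_left hw, if_neg hw⟩
  refine le_of_le_of_eq (card_add_one_le_card_of_injOn_compl_pair x y (cE s(x, y)) (cV x) (cV y) ℓ
    ?_ ?_ ?_) (Fintype.card_fin k)
  · have := h.nodup_of_isTRCColoring hc ha hay hb hbx
    simp only [List.nodup_cons, List.mem_cons, List.not_mem_nil, or_false, not_or] at this
    tauto
  · intro w hwx hwy
    rcases hℓ w hwx hwy with ⟨hw, hℓw⟩ | ⟨hw, hℓw⟩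
    · have := h.nodup_of_isTRCColoring hc hw hwy hb hbx
      simp only [List.nodup_cons, List.mem_cons, List.not_mem_nil, or_false, not_or] at this
      rw [hℓw]
      tauto
    · have := h.nodup_of_isTRCColoring hc ha hay hw hwx
      simp only [List.nodup_cons, List.mem_cons, List.not_mem_nil, or_false, not_or] at this
      rw [hℓw]
      tauto
  · intro w w' hwx hwy hw'x hw'y hww'
    rcases hℓ w hwx hwy with ⟨hw, hℓw⟩ | ⟨hw, hℓw⟩ <;>
      rcases hℓ w' hw'x hw'y with ⟨hw', hℓw'⟩ | ⟨hw', hℓw'⟩ <;> rw [hℓw, hℓw']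
    · exact h.isTree.color_ne_of_adj_of_adj hc hw hw' hww'
    · exact fun heq =>
        (List.nodup_cons.1 (h.nodup_of_isTRCColoring hc hw hwy hw' hw'x)).1 (by simp [heq])
    · exact fun heq =>
        (List.nodup_cons.1 (h.nodup_of_isTRCColoring hc hw' hw'y hw hwx)).1 (by simp [heq])
    · exact h.isTree.color_ne_of_adj_of_adj hc hw hw' hww'

end IsDoubleStarWithCenters

variable {G : SimpleGraph V} {x y : V}

lemma isDominatingEdge_compl_of_three_le_dist (h : 3 ≤ G.dist x y) : Gᶜ.IsDominatingEdge x y := by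
  have hxy : x ≠ y := by rintro rfl; simp at h
  refine ⟨(compl_adj G x y).2 ⟨hxy, fun hadj => ?_⟩, fun w hwx hwy => ?_⟩
  · have := G.dist_le hadj.toWalk
    simp only [Walk.length_cons, Walk.length_nil] at this
    omega
  · by_contra! hw
    simp only [compl_adj, not_and, not_not] at hw
    have := G.dist_le (.cons (hw.1 hwx).symm (.cons (hw.2 hwy) .nil))
    simp only [Walk.length_cons, Walk.length_nil] at this
    omega

lemma IsDominatingEdge.compl_adj_of_adj (h : Gᶜ.IsDominatingEdge x y) {a : V} (hya : G.Adj y a) :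
    Gᶜ.Adj a x := by
  have hax : a ≠ x := by rintro rfl; exact ((compl_adj G a y).1 h.1).2 hya.symm
  exact (h.2 a hax hya.ne').resolve_right fun hay => ((compl_adj G a y).1 hay).2 hya.symm

end SimpleGraph

theorem stmt_16_general {V : Type*} [Fintype V] [DecidableEq V] (G : SimpleGraph V)
    [DecidableRel G.Adj] (hdiam : G.diam = 3) :
    trc Gᶜ ≤ Fintype.card V + 1 ∧
      (trc Gᶜ = Fintype.card V + 1 ↔ IsDoubleStar Gᶜ) := by
  have : Nonempty V := (G.nontrivial_of_diam_ne_zero (by omega)).to_nonempty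
  obtain ⟨x, y, hxy⟩ := G.exists_dist_eq_diam
  rw [hdiam] at hxy
  have hD := isDominatingEdge_compl_of_three_le_dist hxy.ge
  have hcol := hD.exists_isTRCColoring_card_add_one
  refine ⟨Nat.sInf_le hcol, ?_⟩
  by_cases hpat : (∃ a b, Gᶜ.Adj x a ∧ Gᶜ.Adj a b ∧ a ≠ y ∧ b ≠ x) ∨
      ∃ a b, Gᶜ.Adj y a ∧ Gᶜ.Adj a b ∧ a ≠ x ∧ b ≠ y
  · have : trc Gᶜ ≤ Fintype.card V ∧ ¬ IsDoubleStar Gᶜ := by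
      rcases hpat with ⟨a, b, hxa, hab, hay, hbx⟩ | ⟨a, b, hya, hab, hax, hby⟩
      · exact ⟨hD.trc_le_card_of_adj_of_adj hxa hab hay hbx, hD.not_isDoubleStar hxa hab hay hbx⟩
      · exact ⟨hD.symm.trc_le_card_of_adj_of_adj hya hab hax hby,
          hD.symm.not_isDoubleStar hya hab hax hby⟩
    exact iff_of_false (by omega) this.2
  push Not at hpat
  have hS := hD.isDoubleStarWithCenters hpat.1 hpat.2
  have hreach := Reachable.of_dist_ne_zero (G := G) (u := x) (v := y) (by omega)
  obtain ⟨a, hya⟩ := hreach.nonempty_neighborSet_right hD.1.ne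
  obtain ⟨b, hxb⟩ := hreach.nonempty_neighborSet_left hD.1.ne
  refine iff_of_true (le_antisymm (Nat.sInf_le hcol) (le_trc ⟨_, hcol⟩ fun k cE cV hc => ?_))
    hS.isDoubleStar
  exact hS.card_add_one_le (hD.compl_adj_of_adj hya) hya.ne' (hD.symm.compl_adj_of_adj hxb)
    hxb.ne' hc

theorem stmt_16 {V : Type*} [Fintype V] [DecidableEq V] (G : SimpleGraph V)
    [DecidableRel G.Adj] (hconn : G.Connected) (hcconn : Gᶜ.Connected)
    (hdiam : G.diam = 3) :
    trc Gᶜ ≤ Fintype.card V + 1 ∧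
      (trc Gᶜ = Fintype.card V + 1 ↔ IsDoubleStar Gᶜ) :=
  stmt_16_general G hdiam
end

section
/- If $P_n = v_1 v_2 \cdots v_n$ is the path on $n \geq 5$ vertices, then the complement $\overline{P_n}$ satisfies $trc(\overline{P_n}) = 3$. -/
open SimpleGraph

theorem stmt_17 (n : ℕ) (hn : 5 ≤ n) :
    trc (SimpleGraph.pathGraph n)ᶜ = 3 := by
  have hmem : 3 ∈ {k | ∃ (cE : Sym2 (Fin n) → Fin k) (cV : Fin n → Fin k),
      IsTRCColoring (pathGraph n)ᶜ cE cV} := by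
    set cE : Sym2 (Fin n) → Fin 3 :=
      Sym2.lift ⟨fun a b => ⟨(a.val + b.val) % 2, by omega⟩,
        fun a b => by simp [Nat.add_comm]⟩ with hcE
    refine ⟨cE, fun _ => 2, ?_⟩
    intro u v huv
    by_cases hadj : ((pathGraph n)ᶜ).Adj u v
    · exact ⟨Walk.cons hadj Walk.nil, by simp [huv], by simp⟩
    · have hP : (pathGraph n).Adj u v := by
        by_contra h
        exact hadj ⟨huv, h⟩
      rw [pathGraph_adj] at hP
      have hu : u.val < n := u.isLt
      have hv : v.val < n := v.isLt
      set m := min u.val v.val with hm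
      set wv := if m + 3 < n then m + 3 else m - 2 with hwv
      have hwlt : wv < n := by rw [hwv]; split <;> omega
      set w : Fin n := ⟨wv, hwlt⟩ with hwdef
      have hwval : w.val = wv := rfl
      have hwu : wv + 2 ≤ u.val ∨ u.val + 2 ≤ wv := by rw [hwv]; split <;> omega
      have hwvv : wv + 2 ≤ v.val ∨ v.val + 2 ≤ wv := by rw [hwv]; split <;> omega
      have huw : u ≠ w := Fin.ne_of_val_ne (by omega)
      have hwv' : w ≠ v := Fin.ne_of_val_ne (by omega)
      have h1 : ((pathGraph n)ᶜ).Adj u w :=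
        ⟨huw, by rw [pathGraph_adj]; omega⟩
      have h2 : ((pathGraph n)ᶜ).Adj w v :=
        ⟨hwv', by rw [pathGraph_adj]; omega⟩
      refine ⟨Walk.cons h1 (Walk.cons h2 Walk.nil), ?_, ?_⟩
      · rw [Walk.isPath_def]
        simp [List.nodup_cons, huw, huv, hwv']
      · show (cE s(u, w) :: cE s(w, v) :: (2 : Fin 3) :: []).Nodup
        have hc12 : cE s(u, w) ≠ cE s(w, v) := by
          rw [hcE]
          simp only [Sym2.lift_mk]
          exact Fin.ne_of_val_ne (by simp only []; omega)
        have hc13 : cE s(u, w) ≠ (2 : Fin 3) := by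
          rw [hcE]
          simp only [Sym2.lift_mk]
          exact Fin.ne_of_val_ne (by simp; omega)
        have hc23 : cE s(w, v) ≠ (2 : Fin 3) := by
          rw [hcE]
          simp only [Sym2.lift_mk]
          exact Fin.ne_of_val_ne (by simp; omega)
        refine List.nodup_cons.mpr ⟨?_, List.nodup_cons.mpr ⟨?_, List.nodup_singleton _⟩⟩
        · simp only [List.mem_cons, List.not_mem_nil, or_false, List.mem_singleton]
          push_neg
          exact ⟨hc12, hc13⟩
        · simp only [List.mem_singleton, List.mem_cons, List.not_mem_nil, or_false]
          exact hc23
  refine le_antisymm (Nat.sInf_le hmem) (le_csInf ⟨3, hmem⟩ ?_)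
  rintro k ⟨cE, cV, hc⟩
  by_contra hk
  push_neg at hk
  have h0 : (0:ℕ) < n := by omega
  have h1 : (1:ℕ) < n := by omega
  obtain ⟨p, hp, hnod⟩ := hc ⟨0, h0⟩ ⟨1, h1⟩ (by simp [Fin.ext_iff])
  have hnadj : ¬ ((pathGraph n)ᶜ).Adj ⟨0, h0⟩ ⟨1, h1⟩ := by
    intro h
    exact h.2 (by rw [pathGraph_adj]; left; rfl)
  have hl2 : 2 ≤ p.length := by
    rcases Nat.lt_or_ge p.length 2 with h | h
    · interval_cases hl : p.length
      · exact absurd (p.eq_of_length_eq_zero hl) (by simp [Fin.ext_iff])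
      · exact absurd (p.adj_of_length_eq_one hl) hnadj
    · exact h
  have hlen : (p.edges.map cE ++ p.support.tail.dropLast.map cV).length
      = 2 * p.length - 1 := by
    simp [Walk.length_support]
    omega
  have hle := hnod.length_le_card
  rw [hlen] at hle
  simp [Fintype.card_fin] at hle
  omega
end
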